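/- arXiv:2412.16465 — 6 statements merged into one kernel-verified Lean document; each statement's English description precedes it below -/
import Mathlib

section
/- Let G and H be vertex-disjoint matching covered graphs, let u ∈ V(G) and v ∈ V(H) with deg_G(u) = deg_H(v), and let θ be a bijection from the edges of H incident with v to the edges of G incident with u. Then the splicing G(u) ⊙ H(v) with respect to θ — obtained from the union of G − u and H − v by joining, for each edge e incident with v, the end of e in H − v to the end of θ(e) in G − u — is matching covered. -/
open SimpleGraph

universe u

/-- A graph has a perfect matching. -/
def HasPM {V : Type u} (G : SimpleGraph V) : Prop :=
  ∃ M : G.Subgraph, M.IsPerfectMatching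

/-- A connected graph with at least two vertices in which every edge
lies in a perfect matching. -/
def MatchingCovered {V : Type u} (G : SimpleGraph V) : Prop :=
  G.Connected ∧ 2 ≤ Nat.card V ∧
    ∀ e ∈ G.edgeSet, ∃ M : G.Subgraph, M.IsPerfectMatching ∧ e ∈ M.edgeSet

/-- Number of odd connected components. -/
noncomputable def oddComps {V : Type u} (G : SimpleGraph V) : ℕ :=
  Nat.card {c : G.ConnectedComponent // Odd (Nat.card c.supp)}

/-- An edge is removable if its deletion leaves a matching covered graph. -/
def Removable {V : Type u} (G : SimpleGraph V) (e : Sym2 V) : Prop :=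
  e ∈ G.edgeSet ∧ MatchingCovered (G.deleteEdges {e})

/-- Removable, with absent edges counted as removable. -/
def RemovableExt {V : Type u} (G : SimpleGraph V) (e : Sym2 V) : Prop :=
  e ∉ G.edgeSet ∨ Removable G e

/-- Degree of a vertex. -/
noncomputable def degN {V : Type u} (G : SimpleGraph V) (v : V) : ℕ :=
  Nat.card (G.neighborSet v)

/-- A graph on at least four vertices is bicritical if deleting any two
distinct vertices leaves a graph with a perfect matching. -/
def Bicritical {V : Type u} (G : SimpleGraph V) : Prop :=
  4 ≤ Nat.card V ∧ ∀ u v : V, u ≠ v → HasPM (G.induce ({u, v}ᶜ : Set V))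

/-- A barrier: nonempty set `B` with `o(G - B) = |B|`. -/
def IsBarrier {V : Type u} (G : SimpleGraph V) (B : Set V) : Prop :=
  B.Nonempty ∧ oddComps (G.induce (Bᶜ : Set V)) = B.ncard

/-- 2-connectedness. -/
def TwoConnected {V : Type u} (G : SimpleGraph V) : Prop :=
  3 ≤ Nat.card V ∧ ∀ s : Set V, s.ncard ≤ 1 → (G.induce (sᶜ : Set V)).Connected

/-- 3-connectedness. -/
def ThreeConnected {V : Type u} (G : SimpleGraph V) : Prop :=
  4 ≤ Nat.card V ∧ ∀ s : Set V, s.ncard ≤ 2 → (G.induce (sᶜ : Set V)).Connected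

/-- A brick is a 3-connected bicritical graph. -/
def IsBrick {V : Type u} (G : SimpleGraph V) : Prop :=
  ThreeConnected G ∧ Bicritical G

/-- Map a vertex to the vertex set of the contraction `G/X`. -/
noncomputable def toContract {V : Type u} (X : Set V) (v : V) : ↥(Xᶜ) ⊕ Unit := by
  classical exact if h : v ∈ X then Sum.inr () else Sum.inl ⟨v, h⟩

/-- Contraction `G/X` of the set `X` to a single vertex. -/
noncomputable def contract {V : Type u} (G : SimpleGraph V) (X : Set V) :
    SimpleGraph (↥(Xᶜ) ⊕ Unit) :=
  SimpleGraph.fromRel (fun a b =>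
    ∃ x y, G.Adj x y ∧ a = toContract X x ∧ b = toContract X y)

/-- The edge cut `∂(X)`. -/
def cutEdges {V : Type u} (G : SimpleGraph V) (X : Set V) : Set (Sym2 V) :=
  {e | e ∈ G.edgeSet ∧ ∃ x y, e = s(x, y) ∧ x ∈ X ∧ y ∉ X}

/-- A tight cut: every perfect matching meets it in exactly one edge. -/
def IsTightCut {V : Type u} (G : SimpleGraph V) (X : Set V) : Prop :=
  ∀ M : G.Subgraph, M.IsPerfectMatching → (cutEdges G X ∩ M.edgeSet).ncard = 1

/-- A separating cut: both contractions are matching covered. -/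
def IsSeparatingCut {V : Type u} (G : SimpleGraph V) (X : Set V) : Prop :=
  MatchingCovered (contract G X) ∧ MatchingCovered (contract G Xᶜ)

/-- `(A, B)` is a bipartition of `G`. -/
def IsBipartition {V : Type u} (G : SimpleGraph V) (A B : Set V) : Prop :=
  A ∪ B = Set.univ ∧ A ∩ B = ∅ ∧
    ∀ u v : V, G.Adj u v → (u ∈ A ∧ v ∈ B) ∨ (u ∈ B ∧ v ∈ A)

/-- A P-set of a bipartite matching covered graph with bipartition `(A, B)`. -/
def IsPSet {V : Type u} (G : SimpleGraph V) (A B X : Set V) : Prop :=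
  (X ∩ A).ncard = (X ∩ B).ncard ∧
    ((∃! p : V × V, p.1 ∈ X ∩ A ∧ p.2 ∈ B \ X ∧ G.Adj p.1 p.2) ∨
     (∃! p : V × V, p.1 ∈ A \ X ∧ p.2 ∈ X ∩ B ∧ G.Adj p.1 p.2))

/-- The splicing `G(u) ⊙ H(v)` with respect to the bijection `θ`. -/
def splice {VG VH : Type u} (G : SimpleGraph VG) (H : SimpleGraph VH)
    (u : VG) (v : VH) (θ : ↥(H.neighborSet v) ≃ ↥(G.neighborSet u)) :
    SimpleGraph ({x : VG // x ≠ u} ⊕ {y : VH // y ≠ v}) :=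
  SimpleGraph.fromRel (fun a b =>
    match a, b with
    | .inl a, .inl b => G.Adj a.1 b.1
    | .inr a, .inr b => H.Adj a.1 b.1
    | .inl a, .inr b =>
        ∃ h : b.1 ∈ H.neighborSet v, ((θ ⟨b.1, h⟩ : ↥(G.neighborSet u)) : VG) = a.1
    | _, _ => False)

/-!
Deleting a vertex `u` of a matching covered graph `G` leaves a connected graph: if two neighbours
`a`, `b` of `u` were in different components of `G - u`, a perfect matching through `ua` would
match the component `C` of `b` within itself, and one through `ub` would match `C ∪ {u}` within
itself, so `|C|` would be both even and odd. Hence the splicing is connected. Perfect matchings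
`M ∋ ua` of `G` and `N ∋ vb` of `H` with `θ(vb) = ua` combine into a perfect matching of the
splicing: keep `M` on `G - u` and `N` on `H - v`, and merge `ua` and `vb` into `ab`. Every edge
of the splicing lies in such a combination, since every edge of `G` and of `H` lies in a perfect
matching.
-/

theorem SimpleGraph.Subgraph.IsPerfectMatching.even_ncard_of_adj_mem {V : Type*} [Finite V]
    {G : SimpleGraph V} {M : G.Subgraph} (hM : M.IsPerfectMatching) {s : Set V}
    (hs : ∀ ⦃x y⦄, x ∈ s → M.Adj x y → y ∈ s) : Even s.ncard := by
  have hMs : (M.induce s).IsMatching := fun x hx => by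
    obtain ⟨y, hxy, hy⟩ := hM.1 (hM.2 x)
    exact ⟨y, ⟨hx, hs hx hxy, hxy⟩, fun z hz => hy z hz.2.2⟩
  have : Fintype (M.induce s).verts := Fintype.ofFinite s
  have := hMs.even_card
  rwa [← Set.ncard_eq_toFinset_card'] at this

theorem SimpleGraph.Reachable.exists_adj_reachable_induce_compl_singleton {V : Type*}
    {G : SimpleGraph V} {x u : V} (h : G.Reachable x u) (hx : x ≠ u) :
    ∃ (a : V) (ha : G.Adj a u), (G.induce {u}ᶜ).Reachable ⟨x, hx⟩ ⟨a, ha.ne⟩ := by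
  obtain ⟨p⟩ := h
  induction p with
  | nil => exact absurd rfl hx
  | @cons x y u hxy p ih =>
    by_cases hy : y = u
    · subst hy
      exact ⟨x, hxy, .refl _⟩
    · obtain ⟨a, ha, hr⟩ := ih hy
      exact ⟨a, ha, (show (G.induce {u}ᶜ).Adj ⟨x, hx⟩ ⟨y, hy⟩ from hxy).reachable.trans hr⟩

section MatchingCovered

variable {V : Type u} {G : SimpleGraph V}

theorem MatchingCovered.finite (hG : MatchingCovered G) : Finite V :=
  Nat.finite_of_card_ne_zero (by have := hG.2.1; omega)

theorem MatchingCovered.exists_adj (hG : MatchingCovered G) (x : V) : ∃ y, G.Adj x y :=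
  have := hG.finite
  have : Nontrivial V := Finite.one_lt_card_iff_nontrivial.mp hG.2.1
  hG.1.preconnected.exists_adj_of_nontrivial x

theorem MatchingCovered.exists_isPerfectMatching_adj (hG : MatchingCovered G) {x y : V}
    (h : G.Adj x y) : ∃ M : G.Subgraph, M.IsPerfectMatching ∧ M.Adj x y := by
  obtain ⟨M, hM, hxy⟩ := hG.2.2 s(x, y) h
  exact ⟨M, hM, hxy⟩

theorem MatchingCovered.reachable_induce_compl_singleton (hG : MatchingCovered G) {u a b : V}
    (ha : G.Adj a u) (hb : G.Adj b u) :
    (G.induce {u}ᶜ).Reachable ⟨a, ha.ne⟩ ⟨b, hb.ne⟩ := by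
  have := hG.finite
  by_contra hab
  set s : Set V := {x | ∃ hx : x ≠ u, (G.induce {u}ᶜ).Reachable ⟨x, hx⟩ ⟨b, hb.ne⟩}
  have hs : ∀ ⦃x y⦄, x ∈ s → G.Adj x y → y ≠ u → y ∈ s := fun x y ⟨hx, hr⟩ hxy hy =>
    ⟨hy, (show (G.induce {u}ᶜ).Adj ⟨y, hy⟩ ⟨x, hx⟩ from hxy.symm).reachable.trans hr⟩
  have has : a ∉ s := fun ⟨_, h⟩ => hab h
  have hus : u ∉ s := fun ⟨h, _⟩ => h rfl
  obtain ⟨M, hM, hMa⟩ := hG.exists_isPerfectMatching_adj ha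
  obtain ⟨N, hN, hNb⟩ := hG.exists_isPerfectMatching_adj hb
  have heven : Even s.ncard := hM.even_ncard_of_adj_mem fun x y hx hxy =>
    hs hx (M.adj_sub hxy) fun hyu => has (hM.1.eq_of_adj_right (hyu ▸ hxy) hMa ▸ hx)
  have hodd : Even (insert u s).ncard := hN.even_ncard_of_adj_mem fun x y hx hxy => by
    rcases hx with rfl | hx
    · rw [hN.1.eq_of_adj_left hxy hNb.symm]
      exact Set.mem_insert_of_mem _ ⟨hb.ne, .refl _⟩
    · by_cases hyu : y = u
      · exact hyu ▸ Set.mem_insert u s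
      · exact Set.mem_insert_of_mem _ (hs hx (N.adj_sub hxy) hyu)
  rw [Set.ncard_insert_of_notMem hus] at hodd
  exact Nat.even_add_one.mp hodd heven

theorem MatchingCovered.connected_induce_compl_singleton (hG : MatchingCovered G) (u : V) :
    (G.induce {u}ᶜ).Connected := by
  obtain ⟨a, ha⟩ := hG.exists_adj u
  have key : ∀ x : ↥({u}ᶜ : Set V), (G.induce {u}ᶜ).Reachable x ⟨a, ha.ne'⟩ := fun x => by
    obtain ⟨b, hb, hxb⟩ := (hG.1.preconnected x u).exists_adj_reachable_induce_compl_singleton x.2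
    exact hxb.trans (hG.reachable_induce_compl_singleton hb ha.symm)
  exact (connected_iff _).mpr ⟨fun x y => (key x).trans (key y).symm, ⟨⟨a, ha.ne'⟩⟩⟩

end MatchingCovered

section Splice

variable {VG VH : Type u} {G : SimpleGraph VG} {H : SimpleGraph VH} {u : VG} {v : VH}
  {θ : ↥(H.neighborSet v) ≃ ↥(G.neighborSet u)}

theorem splice_adj_inl_inl {x y : {x : VG // x ≠ u}} :
    (splice G H u v θ).Adj (.inl x) (.inl y) ↔ G.Adj x y := by
  simp only [splice, fromRel_adj, ne_eq, Sum.inl.injEq]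
  exact ⟨fun h => h.2.elim id .symm, fun h => ⟨fun hxy => h.ne (congrArg _ hxy), .inl h⟩⟩

theorem splice_adj_inr_inr {x y : {y : VH // y ≠ v}} :
    (splice G H u v θ).Adj (.inr x) (.inr y) ↔ H.Adj x y := by
  simp only [splice, fromRel_adj, ne_eq, Sum.inr.injEq]
  exact ⟨fun h => h.2.elim id .symm, fun h => ⟨fun hxy => h.ne (congrArg _ hxy), .inl h⟩⟩

theorem splice_adj_inl_inr {x : {x : VG // x ≠ u}} {y : {y : VH // y ≠ v}} :
    (splice G H u v θ).Adj (.inl x) (.inr y) ↔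
      ∃ h : y.1 ∈ H.neighborSet v, (θ ⟨y, h⟩ : VG) = x := by
  simp [splice, fromRel_adj]

theorem splice_connected (hG : (G.induce {u}ᶜ).Connected) (hH : (H.induce {v}ᶜ).Connected)
    (e : H.neighborSet v) : (splice G H u v θ).Connected := by
  let ιG : G.induce {u}ᶜ →g splice G H u v θ := ⟨Sum.inl, splice_adj_inl_inl.mpr⟩
  let ιH : H.induce {v}ᶜ →g splice G H u v θ := ⟨Sum.inr, splice_adj_inr_inr.mpr⟩
  have hcross : (splice G H u v θ).Adj (.inl ⟨θ e, (θ e).2.ne'⟩) (.inr ⟨e, e.2.ne'⟩) :=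
    splice_adj_inl_inr.mpr ⟨e.2, rfl⟩
  have key : ∀ p, (splice G H u v θ).Reachable p (.inr ⟨e, e.2.ne'⟩) := by
    rintro (x | y)
    · exact ((hG.preconnected x ⟨θ e, (θ e).2.ne'⟩).map ιG).trans hcross.reachable
    · exact (hH.preconnected y ⟨e, e.2.ne'⟩).map ιH
  exact (connected_iff _).mpr ⟨fun p q => (key p).trans (key q).symm, ⟨.inr ⟨e, e.2.ne'⟩⟩⟩

/-- `M` on `G - u` and `N` on `H - v`, with the edges `ua ∈ M` and `vb ∈ N` merged into `ab`. -/
def spliceMatching (M : G.Subgraph) (N : H.Subgraph) (a : {x : VG // x ≠ u})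
    (b : {y : VH // y ≠ v}) : SimpleGraph ({x : VG // x ≠ u} ⊕ {y : VH // y ≠ v}) where
  Adj
    | .inl x, .inl x' => M.Adj x x'
    | .inr y, .inr y' => N.Adj y y'
    | .inl x, .inr y => x = a ∧ y = b
    | .inr y, .inl x => x = a ∧ y = b
  symm := ⟨by rintro (x | y) (x' | y') h <;> first | exact h.symm | exact h⟩
  loopless := ⟨by rintro (x | y) h <;> exact (Subgraph.adj_sub _ h).ne rfl⟩

variable {M : G.Subgraph} {N : H.Subgraph} {a : {x : VG // x ≠ u}} {b : {y : VH // y ≠ v}}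

theorem spliceMatching_le_splice (e : H.neighborSet v) :
    spliceMatching M N ⟨θ e, (θ e).2.ne'⟩ ⟨e, e.2.ne'⟩ ≤ splice G H u v θ := by
  have hab : (splice G H u v θ).Adj (.inl ⟨θ e, (θ e).2.ne'⟩) (.inr ⟨e, e.2.ne'⟩) :=
    splice_adj_inl_inr.mpr ⟨e.2, rfl⟩
  rintro (x | y) (x' | y') h
  · exact splice_adj_inl_inl.mpr (M.adj_sub h)
  · obtain ⟨rfl, rfl⟩ := h
    exact hab
  · obtain ⟨rfl, rfl⟩ := h
    exact hab.symm
  · exact splice_adj_inr_inr.mpr (N.adj_sub h)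

theorem existsUnique_spliceMatching_adj_inl (hM : M.IsPerfectMatching) (ha : M.Adj u a)
    (x : {x : VG // x ≠ u}) : ∃! q, (spliceMatching M N a b).Adj (.inl x) q := by
  obtain rfl | hx := eq_or_ne x a
  · refine ⟨.inr b, ⟨rfl, rfl⟩, ?_⟩
    rintro (x' | y) h
    · exact absurd (hM.1.eq_of_adj_left h ha.symm) x'.2
    · exact congrArg Sum.inr h.2
  · obtain ⟨x', hxx', hx'⟩ := hM.1 (hM.2 x)
    have hx'u : x' ≠ u := by
      rintro rfl
      exact hx (Subtype.ext (hM.1.eq_of_adj_right hxx' ha.symm))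
    refine ⟨.inl ⟨x', hx'u⟩, hxx', ?_⟩
    rintro (x'' | y) h
    · exact congrArg Sum.inl (Subtype.ext (hx' _ h))
    · exact absurd h.1 hx

theorem existsUnique_spliceMatching_adj_inr (hN : N.IsPerfectMatching) (hb : N.Adj v b)
    (y : {y : VH // y ≠ v}) : ∃! q, (spliceMatching M N a b).Adj (.inr y) q := by
  obtain rfl | hy := eq_or_ne y b
  · refine ⟨.inl a, ⟨rfl, rfl⟩, ?_⟩
    rintro (x | y') h
    · exact congrArg Sum.inl h.1
    · exact absurd (hN.1.eq_of_adj_left h hb.symm) y'.2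
  · obtain ⟨y', hyy', hy'⟩ := hN.1 (hN.2 y)
    have hy'v : y' ≠ v := by
      rintro rfl
      exact hy (Subtype.ext (hN.1.eq_of_adj_right hyy' hb.symm))
    refine ⟨.inr ⟨y', hy'v⟩, hyy', ?_⟩
    rintro (x | y'') h
    · exact absurd h.2 hy
    · exact congrArg Sum.inr (Subtype.ext (hy' _ h))

theorem exists_isPerfectMatching_splice (hM : M.IsPerfectMatching) (hN : N.IsPerfectMatching)
    (e : H.neighborSet v) (hMe : M.Adj u (θ e)) (hNe : N.Adj v e) :
    ∃ S : (splice G H u v θ).Subgraph, S.IsPerfectMatching ∧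
      (∀ x x' : {x : VG // x ≠ u}, M.Adj x x' → S.Adj (.inl x) (.inl x')) ∧
      (∀ y y' : {y : VH // y ≠ v}, N.Adj y y' → S.Adj (.inr y) (.inr y')) ∧
      S.Adj (.inl ⟨θ e, (θ e).2.ne'⟩) (.inr ⟨e, e.2.ne'⟩) := by
  refine ⟨toSubgraph _ (spliceMatching_le_splice e), Subgraph.isPerfectMatching_iff.mpr ?_,
    fun _ _ h => h, fun _ _ h => h, ⟨rfl, rfl⟩⟩
  rintro (x | y)
  · exact existsUnique_spliceMatching_adj_inl hM hMe x
  · exact existsUnique_spliceMatching_adj_inr hN hNe y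

theorem MatchingCovered.exists_isPerfectMatching_splice_adj_inl_inl (hG : MatchingCovered G)
    (hH : MatchingCovered H) {x y : {x : VG // x ≠ u}} (h : G.Adj x y) :
    ∃ S : (splice G H u v θ).Subgraph, S.IsPerfectMatching ∧ S.Adj (.inl x) (.inl y) := by
  obtain ⟨M, hM, hxy⟩ := hG.exists_isPerfectMatching_adj h
  obtain ⟨a, hua, -⟩ := hM.1 (hM.2 u)
  obtain ⟨N, hN, hNe⟩ := hH.exists_isPerfectMatching_adj (θ.symm ⟨a, M.adj_sub hua⟩).2
  obtain ⟨S, hS, hSM, -, -⟩ := exists_isPerfectMatching_splice (θ := θ) hM hN _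
    (by rwa [Equiv.apply_symm_apply]) hNe
  exact ⟨S, hS, hSM x y hxy⟩

theorem MatchingCovered.exists_isPerfectMatching_splice_adj_inr_inr (hG : MatchingCovered G)
    (hH : MatchingCovered H) {x y : {y : VH // y ≠ v}} (h : H.Adj x y) :
    ∃ S : (splice G H u v θ).Subgraph, S.IsPerfectMatching ∧ S.Adj (.inr x) (.inr y) := by
  obtain ⟨N, hN, hxy⟩ := hH.exists_isPerfectMatching_adj h
  obtain ⟨b, hvb, -⟩ := hN.1 (hN.2 v)
  obtain ⟨M, hM, hMe⟩ := hG.exists_isPerfectMatching_adj (θ ⟨b, N.adj_sub hvb⟩).2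
  obtain ⟨S, hS, -, hSN, -⟩ := exists_isPerfectMatching_splice hM hN _ hMe hvb
  exact ⟨S, hS, hSN x y hxy⟩

theorem MatchingCovered.exists_isPerfectMatching_splice_adj_inl_inr (hG : MatchingCovered G)
    (hH : MatchingCovered H) {x : {x : VG // x ≠ u}} {y : {y : VH // y ≠ v}}
    (h : (splice G H u v θ).Adj (.inl x) (.inr y)) :
    ∃ S : (splice G H u v θ).Subgraph, S.IsPerfectMatching ∧ S.Adj (.inl x) (.inr y) := by
  obtain ⟨x, hx⟩ := x
  obtain ⟨hy, rfl⟩ := splice_adj_inl_inr.mp h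
  obtain ⟨M, hM, hMe⟩ := hG.exists_isPerfectMatching_adj (θ ⟨y, hy⟩).2
  obtain ⟨N, hN, hNe⟩ := hH.exists_isPerfectMatching_adj hy
  obtain ⟨S, hS, -, -, hSe⟩ := exists_isPerfectMatching_splice hM hN _ hMe hNe
  exact ⟨S, hS, hSe⟩

theorem MatchingCovered.exists_isPerfectMatching_splice_adj (hG : MatchingCovered G)
    (hH : MatchingCovered H) :
    ∀ {p q}, (splice G H u v θ).Adj p q →
      ∃ S : (splice G H u v θ).Subgraph, S.IsPerfectMatching ∧ S.Adj p q
  | .inl _, .inl _, h => hG.exists_isPerfectMatching_splice_adj_inl_inl hH (splice_adj_inl_inl.mp h)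
  | .inr _, .inr _, h => hG.exists_isPerfectMatching_splice_adj_inr_inr hH (splice_adj_inr_inr.mp h)
  | .inl _, .inr _, h => hG.exists_isPerfectMatching_splice_adj_inl_inr hH h
  | .inr _, .inl _, h =>
    (hG.exists_isPerfectMatching_splice_adj_inl_inr hH h.symm).imp fun _ hS => ⟨hS.1, hS.2.symm⟩

end Splice

theorem stmt5_general {VG VH : Type u}
    (G : SimpleGraph VG) (H : SimpleGraph VH) (u : VG) (v : VH)
    (hG : MatchingCovered G) (hH : MatchingCovered H)
    (θ : ↥(H.neighborSet v) ≃ ↥(G.neighborSet u)) :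
    MatchingCovered (splice G H u v θ) := by
  have := hG.finite
  have := hH.finite
  obtain ⟨a, ha⟩ := hG.exists_adj u
  obtain ⟨b, hb⟩ := hH.exists_adj v
  refine ⟨splice_connected (hG.connected_induce_compl_singleton u)
    (hH.connected_induce_compl_singleton v) ⟨b, hb⟩, ?_,
    fun e => Sym2.ind (fun _ _ h => hG.exists_isPerfectMatching_splice_adj hH h) e⟩
  have hGu : 0 < Nat.card {x : VG // x ≠ u} := Nat.card_pos_iff.mpr ⟨⟨a, ha.ne'⟩, inferInstance⟩
  have hHv : 0 < Nat.card {y : VH // y ≠ v} := Nat.card_pos_iff.mpr ⟨⟨b, hb.ne'⟩, inferInstance⟩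
  rw [Nat.card_sum]
  omega

theorem stmt5 {VG VH : Type u} [Finite VG] [Finite VH]
    (G : SimpleGraph VG) (H : SimpleGraph VH) (u : VG) (v : VH)
    (hG : MatchingCovered G) (hH : MatchingCovered H)
    (hdeg : degN G u = degN H v)
    (θ : ↥(H.neighborSet v) ≃ ↥(G.neighborSet u)) :
    MatchingCovered (splice G H u v θ) :=
  stmt5_general G H u v hG hH θ
end

section
/- Let C = ∂(X) be a separating cut of a matching covered graph G, and let e be an edge of G not in C. If e is removable in both C-contractions of G, then e is removable in G. -/
open SimpleGraph

universe u

/-!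
Let `H = G - e`. As `e` is not in the cut, the two contractions of `H` are those of `G` with the
image of `e` deleted (on the side where `e` collapses to a loop nothing is deleted), so they are
matching covered: the cut is still separating in `H`. Perfect matchings of the two contractions
that use the same cut edge glue to a perfect matching of `H`; this puts every edge of `H` in a
perfect matching. Finally `e` is no bridge of `G` by a parity argument, so `H` is connected.
-/

section Contraction

variable {V : Type u} {G : SimpleGraph V} {Y : Set V} {u v : V}

lemma toContract_of_mem (h : v ∈ Y) : toContract Y v = Sum.inr () := by
  simp [toContract, h]

lemma toContract_of_notMem (h : v ∉ Y) : toContract Y v = Sum.inl ⟨v, h⟩ := by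
  simp [toContract, h]

@[simp]
lemma toContract_val (p : ↥Yᶜ) : toContract Y p = Sum.inl p :=
  toContract_of_notMem p.2

lemma toContract_eq_toContract_iff :
    toContract Y u = toContract Y v ↔ u = v ∨ u ∈ Y ∧ v ∈ Y := by
  unfold toContract
  grind

lemma toContract_eq_inr_iff : toContract Y v = Sum.inr () ↔ v ∈ Y := by
  unfold toContract
  grind

lemma contract_adj {a b : ↥Yᶜ ⊕ Unit} :
    (contract G Y).Adj a b ↔
      a ≠ b ∧ ∃ u v, G.Adj u v ∧ toContract Y u = a ∧ toContract Y v = b := by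
  simp only [contract, fromRel_adj]
  constructor
  · rintro ⟨hne, ⟨u, v, huv, rfl, rfl⟩ | ⟨u, v, huv, rfl, rfl⟩⟩
    · exact ⟨hne, u, v, huv, rfl, rfl⟩
    · exact ⟨hne, v, u, huv.symm, rfl, rfl⟩
  · rintro ⟨hne, u, v, huv, rfl, rfl⟩
    exact ⟨hne, Or.inl ⟨u, v, huv, rfl, rfl⟩⟩

lemma contract_adj_toContract (huv : G.Adj u v) (h : toContract Y u ≠ toContract Y v) :
    (contract G Y).Adj (toContract Y u) (toContract Y v) :=
  contract_adj.2 ⟨h, u, v, huv, rfl, rfl⟩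

lemma adj_of_contract_adj (h : (contract G Y).Adj (toContract Y u) (toContract Y v))
    (hu : u ∉ Y) (hv : v ∉ Y) : G.Adj u v := by
  obtain ⟨-, u', v', h', hu', hv'⟩ := contract_adj.1 h
  obtain rfl : u' = u := by simpa [toContract_eq_toContract_iff, hu] using hu'
  obtain rfl : v' = v := by simpa [toContract_eq_toContract_iff, hv] using hv'
  exact h'

lemma exists_adj_of_contract_adj_inr {p : ↥Yᶜ}
    (h : (contract G Y).Adj (Sum.inl p) (Sum.inr ())) : ∃ b ∈ Y, G.Adj p b := by
  obtain ⟨-, u, b, hub, hu, hb⟩ := contract_adj.1 h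
  obtain rfl : u = p :=
    (toContract_eq_toContract_iff.1 (hu.trans (toContract_val p).symm)).resolve_right
      fun h => p.2 h.2
  exact ⟨b, toContract_eq_inr_iff.1 hb, hub⟩

lemma contract_deleteEdges {x y : V} (hxy : x ∈ Y ↔ y ∈ Y) :
    contract (G.deleteEdges {s(x, y)}) Y =
      (contract G Y).deleteEdges {Sym2.map (toContract Y) s(x, y)} := by
  ext a b
  simp only [deleteEdges_adj, contract_adj, Set.mem_singleton_iff, Sym2.map_mk]
  constructor
  · rintro ⟨hab, u, v, ⟨huv, he⟩, rfl, rfl⟩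
    refine ⟨⟨hab, u, v, huv, rfl, rfl⟩, fun h => he ?_⟩
    -- the image of `xy` is not a loop, so `x, y ∉ Y`, where `toContract Y` is injective
    have hx : x ∉ Y := fun hx => hab (by
      rcases Sym2.eq_iff.1 h with ⟨h1, h2⟩ | ⟨h1, h2⟩ <;>
        simp [h1, h2, toContract_of_mem hx, toContract_of_mem (hxy.1 hx)])
    have hy : y ∉ Y := fun hy => hx (hxy.2 hy)
    rcases Sym2.eq_iff.1 h with ⟨h1, h2⟩ | ⟨h1, h2⟩ <;>
      simp_all [toContract_eq_toContract_iff]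
  · rintro ⟨⟨hab, u, v, huv, rfl, rfl⟩, he⟩
    refine ⟨hab, u, v, ⟨huv, fun h => he ?_⟩, rfl, rfl⟩
    simpa using congrArg (Sym2.map (toContract Y)) h

end Contraction

lemma SimpleGraph.Subgraph.IsPerfectMatching.exists_adj_inr {W : Type*}
    {K : SimpleGraph (W ⊕ Unit)} {M : K.Subgraph} (hM : M.IsPerfectMatching) :
    ∃ p : W, M.Adj (Sum.inl p) (Sum.inr ()) := by
  obtain ⟨w, hw, -⟩ := hM.1 (hM.2 (Sum.inr ()))
  rcases w with p | ⟨⟩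
  · exact ⟨p, hw.symm⟩
  · exact absurd hw (M.loopless.irrefl _)

section Glue

variable {V : Type u} {G : SimpleGraph V} {Y Z : Set V}
  {M₁ : (contract G Y).Subgraph} {M₂ : (contract G Z).Subgraph} {a b v w : V}

/-- Adjacency in the perfect matching of `G` glued from perfect matchings of `G/Y` and `G/Z`
(for complementary `Y`, `Z`) that use the same cut edge: the edges of `M₁` inside `Yᶜ`, those
of `M₂` inside `Zᶜ` and the shared cut edge are exactly the pairs whose images are adjacent or
equal in both contractions. -/
def GluedAdj (M₁ : (contract G Y).Subgraph) (M₂ : (contract G Z).Subgraph) (v w : V) : Prop :=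
  v ≠ w ∧ (M₁.Adj (toContract Y v) (toContract Y w) ∨ toContract Y v = toContract Y w) ∧
    (M₂.Adj (toContract Z v) (toContract Z w) ∨ toContract Z v = toContract Z w)

def SharesCutEdge (M₁ : (contract G Y).Subgraph) (M₂ : (contract G Z).Subgraph) (a b : V) :
    Prop :=
  a ∉ Y ∧ b ∈ Y ∧ G.Adj a b ∧ M₁.Adj (toContract Y a) (toContract Y b) ∧
    M₂.Adj (toContract Z a) (toContract Z b)

lemma gluedAdj_comm : GluedAdj M₁ M₂ v w ↔ GluedAdj M₂ M₁ v w :=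
  and_congr_right fun _ => and_comm

lemma GluedAdj.symm (h : GluedAdj M₁ M₂ v w) : GluedAdj M₁ M₂ w v := by
  obtain ⟨hne, h₁, h₂⟩ := h
  exact ⟨hne.symm, h₁.imp Subgraph.Adj.symm Eq.symm, h₂.imp Subgraph.Adj.symm Eq.symm⟩

lemma SharesCutEdge.swap (hYZ : IsCompl Y Z) (h : SharesCutEdge M₁ M₂ a b) :
    SharesCutEdge M₂ M₁ b a := by
  obtain rfl := hYZ.compl_eq
  obtain ⟨ha, hb, hab, h₁, h₂⟩ := h
  exact ⟨not_not.2 hb, ha, hab.symm, h₂.symm, h₁.symm⟩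

lemma gluedAdj_iff_of_notMem (hYZ : IsCompl Y Z) (hv : v ∉ Y) :
    GluedAdj M₁ M₂ v w ↔ M₁.Adj (toContract Y v) (toContract Y w) ∧
      (w ∈ Y → M₂.Adj (toContract Z v) (toContract Z w)) := by
  obtain rfl := hYZ.compl_eq
  rw [GluedAdj, toContract_of_mem (show v ∈ Yᶜ from hv)]
  constructor
  · rintro ⟨hne, h₁ | h₁, h₂⟩
    · exact ⟨h₁, fun hw => h₂.resolve_right fun h => toContract_eq_inr_iff.1 h.symm hw⟩
    · exact absurd ((toContract_eq_toContract_iff.1 h₁).resolve_right fun h => hv h.1) hne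
  · rintro ⟨h₁, h₂⟩
    refine ⟨fun h => h₁.ne (congrArg _ h), Or.inl h₁, ?_⟩
    by_cases hw : w ∈ Y
    · exact Or.inl (h₂ hw)
    · exact Or.inr (toContract_of_mem (show w ∈ Yᶜ from hw)).symm

lemma adj_of_gluedAdj_of_notMem (hYZ : IsCompl Y Z) (hM₁ : M₁.IsMatching) (hM₂ : M₂.IsMatching)
    (hcut : SharesCutEdge M₁ M₂ a b) (hv : v ∉ Y) (h : GluedAdj M₁ M₂ v w) : G.Adj v w := by
  rw [gluedAdj_iff_of_notMem hYZ hv] at h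
  obtain rfl := hYZ.compl_eq
  obtain ⟨-, hb, hab, h₁, h₂⟩ := hcut
  by_cases hw : w ∈ Y
  · have hwb : toContract Y w = toContract Y b := by
      rw [toContract_of_mem hw, toContract_of_mem hb]
    obtain rfl : v = a := (toContract_eq_toContract_iff.1
      (hM₁.eq_of_adj_right (hwb ▸ h.1) h₁)).resolve_right fun h => hv h.1
    obtain rfl : w = b := (toContract_eq_toContract_iff.1
      (hM₂.eq_of_adj_left (h.2 hw) h₂)).resolve_right fun h => h.1 hw
    exact hab
  · exact adj_of_contract_adj (M₁.adj_sub h.1) hv hw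

lemma existsUnique_gluedAdj_of_notMem (hYZ : IsCompl Y Z) (hM₁ : M₁.IsPerfectMatching)
    (hM₂ : M₂.IsMatching) (hcut : SharesCutEdge M₁ M₂ a b) (hv : v ∉ Y) :
    ∃! w, GluedAdj M₁ M₂ v w := by
  simp_rw [gluedAdj_iff_of_notMem hYZ hv]
  obtain rfl := hYZ.compl_eq
  obtain ⟨-, hb, -, h₁, h₂⟩ := hcut
  obtain ⟨q, hq, -⟩ := hM₁.1 (hM₁.2 (toContract Y v))
  rcases q with p | ⟨⟩
  · refine ⟨p, ⟨by rwa [toContract_val], fun h => absurd h p.2⟩, fun w hw => ?_⟩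
    exact (toContract_eq_toContract_iff.1 (hM₁.1.eq_of_adj_left hw.1
      (by rwa [toContract_val]))).resolve_right fun h => p.2 h.2
  · obtain rfl : v = a := (toContract_eq_toContract_iff.1 (hM₁.1.eq_of_adj_right hq
      (toContract_of_mem hb ▸ h₁))).resolve_right fun h => hv h.1
    refine ⟨b, ⟨h₁, fun _ => h₂⟩, fun w hw => ?_⟩
    rcases toContract_eq_toContract_iff.1 (hM₁.1.eq_of_adj_left hw.1 h₁) with rfl | ⟨hwY, -⟩
    · rfl
    · exact (toContract_eq_toContract_iff.1 (hM₂.eq_of_adj_left (hw.2 hwY) h₂)).resolve_right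
        fun h => h.1 hwY

lemma exists_isPerfectMatching_gluedAdj (hYZ : IsCompl Y Z) (hM₁ : M₁.IsPerfectMatching)
    (hM₂ : M₂.IsPerfectMatching) (hcut : SharesCutEdge M₁ M₂ a b) :
    ∃ M : G.Subgraph, M.IsPerfectMatching ∧ ∀ v w, M.Adj v w ↔ GluedAdj M₁ M₂ v w := by
  have hadj : ∀ v w, GluedAdj M₁ M₂ v w → G.Adj v w := by
    intro v w h
    by_cases hv : v ∈ Y
    · exact adj_of_gluedAdj_of_notMem hYZ.symm hM₂.1 hM₁.1 (hcut.swap hYZ)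
        (hYZ.disjoint.notMem_of_mem_left hv) (gluedAdj_comm.1 h)
    · exact adj_of_gluedAdj_of_notMem hYZ hM₁.1 hM₂.1 hcut hv h
  refine ⟨⟨Set.univ, GluedAdj M₁ M₂, hadj _ _, fun _ => trivial, ⟨fun _ _ => GluedAdj.symm⟩⟩,
    ?_, fun _ _ => Iff.rfl⟩
  rw [Subgraph.isPerfectMatching_iff]
  intro v
  by_cases hv : v ∈ Y
  · simpa only [gluedAdj_comm] using existsUnique_gluedAdj_of_notMem hYZ.symm hM₂ hM₁.1
      (hcut.swap hYZ) (hYZ.disjoint.notMem_of_mem_left hv)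
  · exact existsUnique_gluedAdj_of_notMem hYZ hM₁ hM₂.1 hcut hv

end Glue

section SeparatingCut

variable {V : Type u} {G : SimpleGraph V} {Y Z : Set V} {u v : V}

lemma MatchingCovered.exists_isPerfectMatching_adj_s6 {W : Type*} {K : SimpleGraph W}
    (hK : MatchingCovered K) {a b : W} (hab : K.Adj a b) :
    ∃ M : K.Subgraph, M.IsPerfectMatching ∧ M.Adj a b :=
  hK.2.2 s(a, b) hab

lemma MatchingCovered.exists_adj_s6 {W : Type*} {K : SimpleGraph W} (hK : MatchingCovered K) :
    ∃ a b, K.Adj a b := by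
  have : Finite W := Nat.finite_of_card_ne_zero (by have := hK.2.1; omega)
  have : Nontrivial W := Finite.one_lt_card_iff_nontrivial.1 hK.2.1
  obtain ⟨a⟩ := hK.1.nonempty
  exact ⟨a, hK.1.preconnected.exists_adj_of_nontrivial a⟩

lemma exists_isPerfectMatching_extending_of_contract (hYZ : IsCompl Y Z)
    (hZ : MatchingCovered (contract G Z)) {M₁ : (contract G Y).Subgraph}
    (hM₁ : M₁.IsPerfectMatching) :
    ∃ M : G.Subgraph, M.IsPerfectMatching ∧
      ∀ u v, u ∉ Y → v ∉ Y → M₁.Adj (toContract Y u) (toContract Y v) → M.Adj u v := by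
  obtain ⟨p, hp⟩ := hM₁.exists_adj_inr
  obtain ⟨b, hb, hpb⟩ := exists_adj_of_contract_adj_inr (M₁.adj_sub hp)
  have hpZ : (p : V) ∈ Z := hYZ.compl_eq ▸ p.2
  have hbZ : b ∉ Z := hYZ.disjoint.notMem_of_mem_left hb
  obtain ⟨M₂, hM₂, hpbM₂⟩ := hZ.exists_isPerfectMatching_adj_s6 (contract_adj_toContract hpb (by
    rw [toContract_of_mem hpZ, toContract_of_notMem hbZ]; simp))
  have hcut : SharesCutEdge M₁ M₂ p b :=
    ⟨p.2, hb, hpb, by rwa [toContract_val, toContract_of_mem hb], hpbM₂⟩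
  obtain ⟨M, hM, hMadj⟩ := exists_isPerfectMatching_gluedAdj hYZ hM₁ hM₂ hcut
  exact ⟨M, hM, fun u v hu hv h =>
    (hMadj u v).2 ((gluedAdj_iff_of_notMem hYZ hu).2 ⟨h, fun hv' => absurd hv' hv⟩)⟩

lemma exists_isPerfectMatching_adj_of_contract_of_notMem (hYZ : IsCompl Y Z)
    (hY : MatchingCovered (contract G Y)) (hZ : MatchingCovered (contract G Z))
    (huv : G.Adj u v) (hu : u ∉ Y) : ∃ M : G.Subgraph, M.IsPerfectMatching ∧ M.Adj u v := by
  by_cases hv : v ∈ Y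
  · have huZ : u ∈ Z := hYZ.compl_eq ▸ hu
    have hvZ : v ∉ Z := hYZ.disjoint.notMem_of_mem_left hv
    obtain ⟨M₁, hM₁, h₁⟩ := hY.exists_isPerfectMatching_adj_s6 (contract_adj_toContract huv (by
      rw [toContract_of_notMem hu, toContract_of_mem hv]; simp))
    obtain ⟨M₂, hM₂, h₂⟩ := hZ.exists_isPerfectMatching_adj_s6 (contract_adj_toContract huv (by
      rw [toContract_of_mem huZ, toContract_of_notMem hvZ]; simp))
    obtain ⟨M, hM, hMadj⟩ := exists_isPerfectMatching_gluedAdj hYZ hM₁ hM₂ ⟨hu, hv, huv, h₁, h₂⟩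
    exact ⟨M, hM, (hMadj u v).2 ((gluedAdj_iff_of_notMem hYZ hu).2 ⟨h₁, fun _ => h₂⟩)⟩
  · obtain ⟨M₁, hM₁, h₁⟩ := hY.exists_isPerfectMatching_adj_s6 (contract_adj_toContract huv (by
      rw [toContract_of_notMem hu, toContract_of_notMem hv]; simpa using huv.ne))
    obtain ⟨M, hM, hMadj⟩ := exists_isPerfectMatching_extending_of_contract hYZ hZ hM₁
    exact ⟨M, hM, hMadj u v hu hv h₁⟩

lemma exists_isPerfectMatching_adj_of_contract (hYZ : IsCompl Y Z)
    (hY : MatchingCovered (contract G Y)) (hZ : MatchingCovered (contract G Z))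
    (huv : G.Adj u v) : ∃ M : G.Subgraph, M.IsPerfectMatching ∧ M.Adj u v := by
  by_cases hu : u ∈ Y
  · exact exists_isPerfectMatching_adj_of_contract_of_notMem hYZ.symm hZ hY huv
      (hYZ.disjoint.notMem_of_mem_left hu)
  · exact exists_isPerfectMatching_adj_of_contract_of_notMem hYZ hY hZ huv hu

namespace IsSeparatingCut

variable {X : Set V}

lemma exists_isPerfectMatching_mem_edgeSet (h : IsSeparatingCut G X) :
    ∀ e ∈ G.edgeSet, ∃ M : G.Subgraph, M.IsPerfectMatching ∧ e ∈ M.edgeSet := by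
  rintro ⟨u, v⟩ huv
  exact exists_isPerfectMatching_adj_of_contract isCompl_compl h.1 h.2 huv

lemma hasPM (h : IsSeparatingCut G X) : HasPM G := by
  obtain ⟨a, b, hab⟩ := h.1.exists_adj_s6
  obtain ⟨-, u, v, huv, -⟩ := contract_adj.1 hab
  obtain ⟨M, hM, -⟩ := exists_isPerfectMatching_adj_of_contract isCompl_compl h.1 h.2 huv
  exact ⟨M, hM⟩

end IsSeparatingCut

end SeparatingCut

section Bridge

variable {V : Type u} [Finite V] {G : SimpleGraph V}

lemma SimpleGraph.Subgraph.IsPerfectMatching.even_ncard_of_closed {M : G.Subgraph}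
    (hM : M.IsPerfectMatching) {S : Set V} (hS : ∀ v ∈ S, ∀ w, M.Adj v w → w ∈ S) :
    Even S.ncard := by
  classical
  have : Fintype V := Fintype.ofFinite V
  have hMS : (M.induce S).IsMatching := by
    intro v hv
    obtain ⟨w, hw, huniq⟩ := hM.1 (hM.2 v)
    exact ⟨w, ⟨hv, hS v hv w hw, hw⟩, fun u hu => huniq u hu.2.2⟩
  simpa [Set.ncard_eq_toFinset_card'] using hMS.even_card

/-- If `xy` were a bridge, the set `S` of vertices reachable from `x` in `G - xy` would be closed
under a perfect matching of `G - xy`, and `S \ {x}` closed under `N`; they cannot both be even. -/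
lemma not_isBridge_of_isPerfectMatching {N : G.Subgraph} (hN : N.IsPerfectMatching) {x y : V}
    (hxy : N.Adj x y) (h : HasPM (G.deleteEdges {s(x, y)})) : ¬ G.IsBridge s(x, y) := by
  rw [isBridge_iff]
  intro hyS
  obtain ⟨N₀, hN₀⟩ := h
  set S := {v | (G.deleteEdges {s(x, y)}).Reachable x v}
  have hS : Even S.ncard :=
    hN₀.even_ncard_of_closed fun v hv w hw => hv.trans (N₀.adj_sub hw).reachable
  have hSx : Even (S \ {x}).ncard := by
    refine hN.even_ncard_of_closed ?_
    rintro v ⟨hvS, hvx⟩ w hw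
    have hvy : v ≠ y := by
      rintro rfl
      exact hyS hvS
    have hwx : w ≠ x := by
      rintro rfl
      exact hvy (hN.1.eq_of_adj_left hw.symm hxy)
    refine ⟨hvS.trans (Adj.reachable ?_), hwx⟩
    rw [deleteEdges_adj]
    refine ⟨N.adj_sub hw, ?_⟩
    simp only [Set.mem_singleton_iff, Sym2.eq_iff, not_or, not_and]
    exact ⟨fun h => absurd h hvx, fun h => absurd h hvy⟩
  rw [← Set.ncard_sdiff_singleton_add_one (show x ∈ S from Reachable.refl x)] at hS
  exact Nat.not_even_iff_odd.2 hSx.add_one hS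

end Bridge

lemma RemovableExt.matchingCovered_deleteEdges {W : Type*} {K : SimpleGraph W} {f : Sym2 W}
    (h : RemovableExt K f) (hK : MatchingCovered K) : MatchingCovered (K.deleteEdges {f}) := by
  rcases h with hf | hf
  · rwa [deleteEdges_eq_self.2 (Set.disjoint_singleton_right.2 hf)]
  · exact hf.2

lemma mem_iff_mem_of_notMem_cutEdges {V : Type u} {G : SimpleGraph V} {X : Set V} {x y : V}
    (he : G.Adj x y) (hnC : s(x, y) ∉ cutEdges G X) : x ∈ X ↔ y ∈ X := by
  refine ⟨fun hx => ?_, fun hy => ?_⟩ <;> by_contra h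
  · exact hnC ⟨he, x, y, rfl, hx, h⟩
  · exact hnC ⟨he, y, x, Sym2.eq_swap, hy, h⟩

theorem stmt6 {V : Type u} [Finite V] (G : SimpleGraph V) (X : Set V)
    (hG : MatchingCovered G) (hsep : IsSeparatingCut G X)
    (x y : V) (he : G.Adj x y) (hnC : s(x, y) ∉ cutEdges G X)
    (h1 : RemovableExt (contract G X) (Sym2.map (toContract X) s(x, y)))
    (h2 : RemovableExt (contract G Xᶜ) (Sym2.map (toContract Xᶜ) s(x, y))) :
    Removable G s(x, y) := by
  have hxy : x ∈ X ↔ y ∈ X := mem_iff_mem_of_notMem_cutEdges he hnC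
  have hsep' : IsSeparatingCut (G.deleteEdges {s(x, y)}) X := by
    constructor
    · rw [contract_deleteEdges hxy]
      exact h1.matchingCovered_deleteEdges hsep.1
    · rw [contract_deleteEdges (not_congr hxy)]
      exact h2.matchingCovered_deleteEdges hsep.2
  obtain ⟨N, hN, heN⟩ := hG.exists_isPerfectMatching_adj_s6 he
  refine ⟨he, ?_, hG.2.1, hsep'.exists_isPerfectMatching_mem_edgeSet⟩
  exact hG.1.connected_delete_edge_of_not_isBridge
    (not_isBridge_of_isPerfectMatching hN heN hsep'.hasPM)
end

section
/- Let G be a matching covered bipartite graph with bipartition (A, B), and let X ⊆ V(G) be a set such that every neighbor of a vertex in X ∩ A lies in X ∩ B. Then |X ∩ A| ≤ |X ∩ B|, with equality if and only if X = ∅ or X = V(G). -/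
open SimpleGraph

universe u

/-!
A perfect matching `M` sends `X ∩ A` injectively into `X ∩ B`, because every neighbour of
`X ∩ A` lies in `X ∩ B`; for `X = V(G)` the same argument with the sides swapped gives
`|A| = |B|`. If `∅ ≠ X ≠ V(G)` and the two sides are equal, then connectivity yields an edge
`xy` leaving `X`; it cannot start in `A`, so `x ∈ X ∩ B` and `y ∈ A \ X`. In a perfect matching
containing `xy` the vertices of `X ∩ B` are all matched into `X ∩ A`, as the counts agree,
so `y ∈ X` — a contradiction.
-/

namespace SimpleGraph.Subgraph.IsPerfectMatching

variable {V : Type u} {G : SimpleGraph V} {M : G.Subgraph}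

noncomputable def partner (hM : M.IsPerfectMatching) (v : V) : V :=
  (hM.1 (hM.2 v)).choose

lemma adj_partner (hM : M.IsPerfectMatching) (v : V) : M.Adj v (hM.partner v) :=
  (hM.1 (hM.2 v)).choose_spec.1

lemma partner_injective (hM : M.IsPerfectMatching) : Function.Injective hM.partner :=
  fun a b hab => hM.1.eq_of_adj_right (hM.adj_partner a) (hab ▸ hM.adj_partner b)

lemma ncard_le_ncard_of_forall_adj_mem (hM : M.IsPerfectMatching) {S T : Set V}
    (hT : T.Finite) (hST : ∀ a ∈ S, ∀ b, G.Adj a b → b ∈ T) : S.ncard ≤ T.ncard :=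
  Set.ncard_le_ncard_of_injOn _ (fun a ha => hST a ha _ (M.adj_sub (hM.adj_partner a)))
    hM.partner_injective.injOn hT

lemma mem_of_adj_of_ncard_eq (hM : M.IsPerfectMatching) {S T : Set V} (hT : T.Finite)
    (hST : ∀ a ∈ S, ∀ b, G.Adj a b → b ∈ T) (hcard : S.ncard = T.ncard) {x y : V}
    (hx : x ∈ T) (hxy : M.Adj x y) : y ∈ S := by
  have himage : hM.partner '' S = T := by
    refine Set.eq_of_subset_of_ncard_le ?_ ?_ hT
    · rintro _ ⟨a, ha, rfl⟩
      exact hST a ha _ (M.adj_sub (hM.adj_partner a))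
    · rw [Set.ncard_image_of_injective _ hM.partner_injective, hcard]
  obtain ⟨a, ha, rfl⟩ := himage ▸ hx
  rwa [hM.1.eq_of_adj_left hxy (hM.adj_partner a).symm]

end SimpleGraph.Subgraph.IsPerfectMatching

lemma SimpleGraph.Connected.exists_adj_mem_notMem {V : Type u} {G : SimpleGraph V}
    (hG : G.Connected) {X : Set V} {u v : V} (hu : u ∈ X) (hv : v ∉ X) :
    ∃ x y, G.Adj x y ∧ x ∈ X ∧ y ∉ X := by
  obtain ⟨d, -, hd1, hd2⟩ := (hG.preconnected u v).some.exists_boundary_dart X hu hv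
  exact ⟨_, _, d.adj, hd1, hd2⟩

namespace MatchingCovered

variable {V : Type u} {G : SimpleGraph V}

lemma exists_adj_s8 (hG : MatchingCovered G) : ∃ u v, G.Adj u v := by
  have : Finite V := Nat.finite_of_card_ne_zero (by have := hG.2.1; omega)
  have : Nontrivial V := Finite.one_lt_card_iff_nontrivial.mp hG.2.1
  obtain ⟨u, v, huv⟩ := exists_pair_ne V
  obtain ⟨x, y, hxy, -, -⟩ :=
    hG.1.exists_adj_mem_notMem (X := {u}) rfl (Set.mem_singleton_iff.not.mpr huv.symm)
  exact ⟨x, y, hxy⟩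

lemma exists_isPerfectMatching (hG : MatchingCovered G) : ∃ M : G.Subgraph, M.IsPerfectMatching :=
  let ⟨u, v, huv⟩ := hG.exists_adj_s8
  let ⟨M, hM, _⟩ := hG.2.2 s(u, v) huv
  ⟨M, hM⟩

end MatchingCovered

namespace IsBipartition

variable {V : Type u} {G : SimpleGraph V} {A B : Set V}

lemma symm (hbip : IsBipartition G A B) : IsBipartition G B A :=
  ⟨Set.union_comm A B ▸ hbip.1, Set.inter_comm A B ▸ hbip.2.1,
    fun u v huv => (hbip.2.2 u v huv).symm⟩

lemma mem_right_of_adj (hbip : IsBipartition G A B) {a b : V} (ha : a ∈ A) (hab : G.Adj a b) :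
    b ∈ B := by
  rcases hbip.2.2 a b hab with ⟨-, hb⟩ | ⟨ha', -⟩
  · exact hb
  · exact (hbip.2.1 ▸ ⟨ha, ha'⟩ : a ∈ (∅ : Set V)).elim

lemma ncard_eq [Finite V] (hbip : IsBipartition G A B) {M : G.Subgraph}
    (hM : M.IsPerfectMatching) : A.ncard = B.ncard :=
  le_antisymm
    (hM.ncard_le_ncard_of_forall_adj_mem (Set.toFinite B) fun _ ha _ => hbip.mem_right_of_adj ha)
    (hM.ncard_le_ncard_of_forall_adj_mem (Set.toFinite A) fun _ hb _ =>
      hbip.symm.mem_right_of_adj hb)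

end IsBipartition

theorem stmt8 {V : Type u} [Finite V] (G : SimpleGraph V) (A B : Set V)
    (hG : MatchingCovered G) (hbip : IsBipartition G A B)
    (X : Set V) (hN : ∀ a ∈ X ∩ A, ∀ b : V, G.Adj a b → b ∈ X ∩ B) :
    (X ∩ A).ncard ≤ (X ∩ B).ncard ∧
      ((X ∩ A).ncard = (X ∩ B).ncard ↔ X = ∅ ∨ X = Set.univ) := by
  obtain ⟨M, hM⟩ := hG.exists_isPerfectMatching
  refine ⟨hM.ncard_le_ncard_of_forall_adj_mem (Set.toFinite _) hN, fun hcard => ?_, ?_⟩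
  · by_contra! hX
    obtain ⟨u, hu⟩ := hX.1
    obtain ⟨v, hv⟩ := (Set.ne_univ_iff_exists_notMem X).mp hX.2
    obtain ⟨x, y, hxy, hx, hy⟩ := hG.1.exists_adj_mem_notMem hu hv
    rcases hbip.2.2 x y hxy with ⟨hxA, -⟩ | ⟨hxB, -⟩
    · exact hy (hN x ⟨hx, hxA⟩ y hxy).1
    · obtain ⟨M', hM', hxyM'⟩ := hG.2.2 s(x, y) hxy
      exact hy (hM'.mem_of_adj_of_ncard_eq (Set.toFinite _) hN hcard ⟨hx, hxB⟩ hxyM').1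
  · rintro (rfl | rfl)
    · simp
    · simpa using hbip.ncard_eq hM
end

section
/- Let G be a matching covered bipartite graph with bipartition (A, B). An edge cut ∂(X) of G is tight if and only if ||X ∩ A| − |X ∩ B|| = 1 and every edge of ∂(X) is incident with a vertex of the larger of the two sets X ∩ A and X ∩ B. -/
open SimpleGraph

universe u

lemma aux_count {V : Type u} [Finite V] {G : SimpleGraph V} {A B X : Set V}
    (hbip : IsBipartition G A B) (M : G.Subgraph) (hM : M.IsPerfectMatching) :
    ∃ sa sb : ℕ,
      (X ∩ A).ncard + sb = (X ∩ B).ncard + sa ∧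
      (cutEdges G X ∩ M.edgeSet).ncard = sa + sb ∧
      (sa = 0 ↔ ∀ x y, M.Adj x y → x ∈ X → y ∉ X → x ∉ A) ∧
      (sb = 0 ↔ ∀ x y, M.Adj x y → x ∈ X → y ∉ X → x ∉ B) := by
  classical
  obtain ⟨hbU, hbI, hbA⟩ := hbip
  have hM' := SimpleGraph.Subgraph.isPerfectMatching_iff.mp hM
  choose f hf hfu using hM'
  have hAB : ∀ v : V, v ∈ A → v ∉ B := fun v hA hB =>
    (Set.eq_empty_iff_forall_notMem.mp hbI v) ⟨hA, hB⟩
  have hmemB : ∀ v : V, v ∉ A → v ∈ B := by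
    intro v h
    have hv : v ∈ A ∪ B := by rw [hbU]; exact Set.mem_univ v
    rcases hv with h' | h'
    · exact absurd h' h
    · exact h'
  have hadj : ∀ v, G.Adj v (f v) := fun v => M.adj_sub (hf v)
  have hfB : ∀ v, v ∈ A → f v ∈ B := by
    intro v hv
    rcases hbA v (f v) (hadj v) with ⟨_, h⟩ | ⟨h, _⟩
    · exact h
    · exact absurd h (hAB v hv)
  have hfA : ∀ v, v ∈ B → f v ∈ A := by
    intro v hv
    rcases hbA v (f v) (hadj v) with ⟨h, _⟩ | ⟨_, h⟩
    · exact absurd hv (hAB v h)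
    · exact h
  have hff : ∀ v, f (f v) = v := fun v => (hfu (f v) v (hf v).symm).symm
  set SA : Set V := {v | v ∈ X ∧ v ∈ A ∧ f v ∉ X} with hSA
  set SB : Set V := {v | v ∈ X ∧ v ∈ B ∧ f v ∉ X} with hSB
  set TA : Set V := {v | v ∈ X ∧ v ∈ A ∧ f v ∈ X} with hTA
  set TB : Set V := {v | v ∈ X ∧ v ∈ B ∧ f v ∈ X} with hTB
  refine ⟨SA.ncard, SB.ncard, ?_, ?_, ?_, ?_⟩
  · -- counting equation
    have hXA : X ∩ A = TA ∪ SA := by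
      ext v
      simp only [Set.mem_inter_iff, Set.mem_union, hTA, hSA, Set.mem_setOf_eq]
      tauto
    have hXB : X ∩ B = TB ∪ SB := by
      ext v
      simp only [Set.mem_inter_iff, Set.mem_union, hTB, hSB, Set.mem_setOf_eq]
      tauto
    have hdA : Disjoint TA SA := Set.disjoint_left.mpr fun v hT hS => hS.2.2 hT.2.2
    have hdB : Disjoint TB SB := Set.disjoint_left.mpr fun v hT hS => hS.2.2 hT.2.2
    have hcA : (X ∩ A).ncard = TA.ncard + SA.ncard := by
      rw [hXA, Set.ncard_union_eq hdA TA.toFinite SA.toFinite]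
    have hcB : (X ∩ B).ncard = TB.ncard + SB.ncard := by
      rw [hXB, Set.ncard_union_eq hdB TB.toFinite SB.toFinite]
    have himg : f '' TA = TB := by
      ext w
      constructor
      · rintro ⟨v, ⟨hvX, hvA, hfvX⟩, rfl⟩
        exact ⟨hfvX, hfB v hvA, by rw [hff]; exact hvX⟩
      · rintro ⟨hwX, hwB, hfwX⟩
        exact ⟨f w, ⟨hfwX, hfA w hwB, by rw [hff]; exact hwX⟩, hff w⟩
    have hinj : Set.InjOn f TA := fun a _ b _ h => by rw [← hff a, h, hff]
    have hTT : TA.ncard = TB.ncard := by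
      rw [← himg, Set.ncard_image_of_injOn hinj]
    rw [hcA, hcB, hTT]; ring
  · -- cut cardinality
    have hd : Disjoint SA SB := Set.disjoint_left.mpr fun v hA' hB' => hAB v hA'.2.1 hB'.2.1
    have himg : (fun v => s(v, f v)) '' (SA ∪ SB) = cutEdges G X ∩ M.edgeSet := by
      ext e
      constructor
      · rintro ⟨v, hv, rfl⟩
        have hvX : v ∈ X ∧ f v ∉ X := by
          rcases hv with h | h
          · exact ⟨h.1, h.2.2⟩
          · exact ⟨h.1, h.2.2⟩
        exact ⟨⟨(hadj v), v, f v, rfl, hvX.1, hvX.2⟩,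
          SimpleGraph.Subgraph.mem_edgeSet.mpr (hf v)⟩
      · rintro ⟨⟨heG, x, y, rfl, hxX, hyX⟩, heM⟩
        have hMxy : M.Adj x y := SimpleGraph.Subgraph.mem_edgeSet.mp heM
        have hy : y = f x := hfu x y hMxy
        subst hy
        refine ⟨x, ?_, rfl⟩
        by_cases hx : x ∈ A
        · exact Or.inl ⟨hxX, hx, hyX⟩
        · exact Or.inr ⟨hxX, hmemB x hx, hyX⟩
    have hinj : Set.InjOn (fun v => s(v, f v)) (SA ∪ SB) := by
      intro a ha b hb h
      simp only [Sym2.eq_iff] at h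
      rcases h with ⟨h1, _⟩ | ⟨h1, h2⟩
      · exact h1
      · exfalso
        have haX : a ∈ X := by rcases ha with h | h <;> exact h.1
        have hbfX : f b ∉ X := by rcases hb with h | h <;> exact h.2.2
        rw [← h1] at hbfX; exact hbfX haX
    rw [← himg, Set.ncard_image_of_injOn hinj,
      Set.ncard_union_eq hd SA.toFinite SB.toFinite]
  · rw [Set.ncard_eq_zero SA.toFinite, Set.eq_empty_iff_forall_notMem]
    constructor
    · intro h x y hxy hxX hyX hxA
      have hy : y = f x := hfu x y hxy
      exact h x ⟨hxX, hxA, hy ▸ hyX⟩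
    · rintro h v ⟨hvX, hvA, hfvX⟩
      exact h v (f v) (hf v) hvX hfvX hvA
  · rw [Set.ncard_eq_zero SB.toFinite, Set.eq_empty_iff_forall_notMem]
    constructor
    · intro h x y hxy hxX hyX hxB
      have hy : y = f x := hfu x y hxy
      exact h x ⟨hxX, hxB, hy ▸ hyX⟩
    · rintro h v ⟨hvX, hvB, hfvX⟩
      exact h v (f v) (hf v) hvX hfvX hvB

lemma bip_swap {V : Type u} {G : SimpleGraph V} {A B : Set V}
    (hbip : IsBipartition G A B) : IsBipartition G B A :=
  ⟨by rw [Set.union_comm]; exact hbip.1, by rw [Set.inter_comm]; exact hbip.2.1,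
    fun u v h => (hbip.2.2 u v h).symm⟩

lemma fwd_aux {V : Type u} [Finite V] {G : SimpleGraph V} {A B X : Set V}
    (hG : MatchingCovered G) (hbip : IsBipartition G A B) (ht : IsTightCut G X)
    (h1 : (X ∩ A).ncard = (X ∩ B).ncard + 1) :
    ∀ x y : V, G.Adj x y → x ∈ X → y ∉ X → x ∈ A := by
  intro x y hxy hx hy
  by_contra hxA
  have hxB : x ∈ B := by
    have hv : x ∈ A ∪ B := by rw [hbip.1]; exact Set.mem_univ x
    rcases hv with h | h
    · exact absurd h hxA
    · exact h
  obtain ⟨M, hM, heM⟩ := hG.2.2 s(x, y) hxy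
  obtain ⟨sa, sb, hc1, hc2, hsa0, hsb0⟩ := aux_count hbip M hM
  have h1' : sa + sb = 1 := by
    have := ht M hM; rw [hc2] at this; exact this
  have hMxy : M.Adj x y := SimpleGraph.Subgraph.mem_edgeSet.mp heM
  have hsb : sb ≠ 0 := fun h => (hsb0.mp h x y hMxy hx hy) hxB
  omega

lemma bwd_aux {V : Type u} [Finite V] {G : SimpleGraph V} {A B X : Set V}
    (hbip : IsBipartition G A B)
    (h1 : (X ∩ A).ncard = (X ∩ B).ncard + 1)
    (h2 : ∀ x y : V, G.Adj x y → x ∈ X → y ∉ X → x ∈ A) : IsTightCut G X := by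
  intro M hM
  obtain ⟨sa, sb, hc1, hc2, hsa0, hsb0⟩ := aux_count hbip M hM
  have hsb : sb = 0 := by
    refine hsb0.mpr fun x y hxy hx hy hxB => ?_
    have hxA : x ∈ A := h2 x y (M.adj_sub hxy) hx hy
    exact (Set.eq_empty_iff_forall_notMem.mp hbip.2.1 x) ⟨hxA, hxB⟩
  rw [hc2]; omega


theorem stmt9 {V : Type u} [Finite V] (G : SimpleGraph V) (A B : Set V)
    (hG : MatchingCovered G) (hbip : IsBipartition G A B) (X : Set V) :
    IsTightCut G X ↔
      (((X ∩ A).ncard = (X ∩ B).ncard + 1 ∧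
          ∀ x y : V, G.Adj x y → x ∈ X → y ∉ X → x ∈ A) ∨
        ((X ∩ B).ncard = (X ∩ A).ncard + 1 ∧
          ∀ x y : V, G.Adj x y → x ∈ X → y ∉ X → x ∈ B)) := by
  constructor
  · intro ht
    obtain ⟨M₀, hM₀⟩ : ∃ M : G.Subgraph, M.IsPerfectMatching := by
      have hnt : Nontrivial V := Finite.one_lt_card_iff_nontrivial.mp (by have := hG.2.1; omega)
      obtain ⟨u, v, huv⟩ := exists_pair_ne V
      obtain ⟨w⟩ := hG.1.preconnected u v
      cases w with
      | nil => exact absurd rfl huv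
      | cons h p => obtain ⟨M, hM, _⟩ := hG.2.2 _ (G.mem_edgeSet.mpr h); exact ⟨M, hM⟩
    obtain ⟨sa, sb, hc1, hc2, hsa0, hsb0⟩ := aux_count hbip M₀ hM₀
    have h1' : sa + sb = 1 := by
      have := ht M₀ hM₀; rw [hc2] at this; exact this
    by_cases hsb : sb = 0
    · have h1 : (X ∩ A).ncard = (X ∩ B).ncard + 1 := by omega
      exact Or.inl ⟨h1, fwd_aux hG hbip ht h1⟩
    · have h1 : (X ∩ B).ncard = (X ∩ A).ncard + 1 := by omega
      exact Or.inr ⟨h1, fwd_aux hG (bip_swap hbip) ht h1⟩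
  · rintro (⟨h1, h2⟩ | ⟨h1, h2⟩)
    · exact bwd_aux hbip h1 h2
    · exact bwd_aux (bip_swap hbip) h1 h2
end

section
/- In an odd wheel W_k with k ≥ 5 (k odd), every edge of the rim is not removable and every spoke (edge incident with the hub) is removable. -/
open SimpleGraph

universe u

/-- The wheel `W_k`: a cycle of length `k` (on `Fin k`) plus a hub. -/
def wheel (k : ℕ) : SimpleGraph (Fin k ⊕ Unit) :=
  SimpleGraph.fromRel (fun a b =>
    match a, b with
    | .inl i, .inl j => (i.val + 1) % k = j.val
    | .inl _, .inr _ => True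
    | _, _ => False)

/-!
Deleting the rim edge `{i, i + 1}` leaves `i` with the two neighbours `i - 1` and the hub, so no
perfect matching contains the spoke at `i - 1`.

Deleting the spoke at `i`, the wheel keeps, for every `j ≠ i`, the perfect matching that uses the
spoke at `j` and pairs the even path `C - j` as `{j + 1, j + 2}, {j + 3, j + 4}, …`. The rim edge
`{m, m + 1}` lies in it when `m - j` is odd, and one of `j = m - 1`, `j = m - 3` differs from `i`.
-/
section PerfectMatching

variable {V : Type*} {G : SimpleGraph V}

lemma exists_isPerfectMatching_of_involutive {f : V → V} (hf : Function.Involutive f)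
    (hadj : ∀ v, G.Adj v (f v)) :
    ∃ M : G.Subgraph, M.IsPerfectMatching ∧ ∀ v, M.Adj v (f v) := by
  refine ⟨⟨Set.univ, fun a b => f a = b, ?_, fun _ => trivial, ?_⟩, ?_, fun v => rfl⟩
  · rintro a b rfl
    exact hadj a
  · constructor
    rintro a b rfl
    exact hf a
  · rw [Subgraph.isPerfectMatching_iff]
    exact fun v => ⟨f v, rfl, fun _ hw => Eq.symm hw⟩

lemma SimpleGraph.Subgraph.IsPerfectMatching.not_adj_of_neighborSet_subset {M : G.Subgraph}
    (hM : M.IsPerfectMatching) {v a b : V} (hva : v ≠ a) (hvb : v ≠ b)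
    (hN : G.neighborSet v ⊆ {a, b}) : ¬ M.Adj a b := by
  intro hab
  obtain ⟨w, hvw, -⟩ := Subgraph.isPerfectMatching_iff.1 hM v
  rcases hN (M.adj_sub hvw) with rfl | rfl
  · exact hvb (hM.1.eq_of_adj_left hvw.symm hab)
  · exact hva (hM.1.eq_of_adj_left hvw.symm hab.symm)

lemma not_matchingCovered_of_neighborSet_subset {v a b : V} (hva : v ≠ a) (hvb : v ≠ b)
    (hab : G.Adj a b) (hN : G.neighborSet v ⊆ {a, b}) : ¬ MatchingCovered G := by
  rintro ⟨-, -, hcov⟩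
  obtain ⟨M, hM, habM⟩ := hcov s(a, b) hab
  exact hM.not_adj_of_neighborSet_subset hva hvb hN habM

end PerfectMatching

section Wheel

variable {k : ℕ}

lemma wheel_adj_inl_inr (i : Fin k) (u : Unit) : (wheel k).Adj (.inl i) (.inr u) := by
  simp [wheel]

lemma wheel_not_adj_inr_inr (u w : Unit) : ¬ (wheel k).Adj (.inr u) (.inr w) := by
  simp [wheel]

variable [NeZero k]

lemma wheel_adj_inl_inl {i j : Fin k} :
    (wheel k).Adj (.inl i) (.inl j) ↔ i ≠ j ∧ (j = i + 1 ∨ i = j + 1) := by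
  have hsucc (a b : Fin k) : (a.val + 1) % k = b.val ↔ b = a + 1 := by
    rw [Fin.ext_iff, Fin.val_add, Fin.val_one', Nat.add_mod_mod, eq_comm]
  simp only [wheel, fromRel_adj, ne_eq, Sum.inl.injEq, hsucc]

lemma Fin.add_one_ne_self (hk : 1 < k) (i : Fin k) : i + 1 ≠ i := by
  intro h
  have := congrArg Fin.val (add_eq_left.1 h)
  rw [Fin.val_one', Nat.mod_eq_of_lt hk] at this
  exact one_ne_zero this

lemma wheel_adj_add_one (hk : 1 < k) (i : Fin k) : (wheel k).Adj (.inl i) (.inl (i + 1)) :=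
  wheel_adj_inl_inl.2 ⟨(Fin.add_one_ne_self hk i).symm, .inl rfl⟩

lemma neighborSet_wheel_deleteEdges_rim_subset (i : Fin k) :
    ((wheel k).deleteEdges {s(.inl i, .inl (i + 1))}).neighborSet (.inl i) ⊆
      {.inl (i - 1), .inr ()} := by
  intro w hw
  rw [mem_neighborSet, deleteEdges_adj, Set.mem_singleton_iff] at hw
  obtain ⟨hadj, hne⟩ := hw
  rcases w with m | u
  · obtain ⟨-, rfl | rfl⟩ := wheel_adj_inl_inl.1 hadj
    · exact absurd rfl hne
    · simp
  · simp

lemma not_removable_wheel_rim (hk : 1 < k) (i : Fin k) :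
    ¬ Removable (wheel k) s(.inl i, .inl (i + 1)) := by
  rintro ⟨-, hcov⟩
  refine not_matchingCovered_of_neighborSet_subset ?_ Sum.inl_ne_inr ?_
    (neighborSet_wheel_deleteEdges_rim_subset i) hcov
  · simpa [sub_eq_iff_eq_add, eq_comm] using Fin.add_one_ne_self hk (i - 1)
  · refine ⟨wheel_adj_inl_inr _ _, ?_⟩
    simp

def spokeMatching (j : Fin k) : Fin k ⊕ Unit → Fin k ⊕ Unit
  | .inr _ => .inl j
  | .inl m => if m = j then .inr () else if Odd (m - j).val then .inl (m + 1) else .inl (m - 1)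

@[simp]
lemma spokeMatching_inr (j : Fin k) (u : Unit) : spokeMatching j (.inr u) = .inl j := rfl

@[simp]
lemma spokeMatching_self (j : Fin k) : spokeMatching j (.inl j) = .inr () := by
  simp [spokeMatching]

lemma spokeMatching_of_odd {j m : Fin k} (h : Odd (m - j).val) :
    spokeMatching j (.inl m) = .inl (m + 1) := by
  have hmj : m ≠ j := by
    rintro rfl
    simp at h
  simp [spokeMatching, hmj, h]

lemma spokeMatching_of_even {j m : Fin k} (hmj : m ≠ j) (h : Even (m - j).val) :
    spokeMatching j (.inl m) = .inl (m - 1) := by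
  simp [spokeMatching, hmj, Nat.not_odd_iff_even.2 h]

lemma spokeMatching_involutive (hodd : Odd k) (j : Fin k) :
    Function.Involutive (spokeMatching j) := by
  rintro (m | u)
  · by_cases hmj : m = j
    · simp [hmj]
    have hd : (m - j).val ≠ 0 := Fin.val_ne_zero_iff.2 (sub_ne_zero.2 hmj)
    rcases Nat.even_or_odd (m - j).val with hd_even | hd_odd
    · have hval : (m - 1 - j).val = (m - j).val - 1 := by
        rw [sub_right_comm, Fin.val_sub_one_of_ne_zero (Fin.val_ne_zero_iff.1 hd)]
      have hpred_odd : Odd (m - 1 - j).val := by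
        rw [hval]
        exact Nat.Even.sub_odd (Nat.one_le_iff_ne_zero.2 hd) hd_even odd_one
      rw [spokeMatching_of_even hmj hd_even, spokeMatching_of_odd hpred_odd, sub_add_cancel]
    · have hlt : (m - j).val + 1 < k := by
        obtain ⟨a, ha⟩ := hd_odd
        obtain ⟨b, hb⟩ := hodd
        have := (m - j).isLt
        omega
      have hval : (m + 1 - j).val = (m - j).val + 1 := by
        rw [add_sub_right_comm, Fin.val_add_one_of_lt' hlt]
      have hne : m + 1 ≠ j := by
        intro h
        rw [← sub_eq_zero, ← Fin.val_eq_zero_iff, hval] at h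
        exact Nat.succ_ne_zero _ h
      rw [spokeMatching_of_odd hd_odd,
        spokeMatching_of_even hne (by rw [hval]; exact hd_odd.add_one), add_sub_cancel_right]
  · simp

lemma wheel_deleteEdges_spoke_adj_spokeMatching (hk : 1 < k) {i j : Fin k} (hji : j ≠ i)
    (v : Fin k ⊕ Unit) :
    ((wheel k).deleteEdges {s(.inl i, .inr ())}).Adj v (spokeMatching j v) := by
  rw [deleteEdges_adj, Set.mem_singleton_iff]
  rcases v with m | u
  · by_cases hmj : m = j
    · subst hmj
      simpa [hji] using wheel_adj_inl_inr m ()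
    rcases Nat.even_or_odd (m - j).val with heven | hodd
    · rw [spokeMatching_of_even hmj heven]
      simpa using (wheel_adj_add_one hk (m - 1)).symm
    · rw [spokeMatching_of_odd hodd]
      simpa using wheel_adj_add_one hk m
  · simpa [hji] using (wheel_adj_inl_inr j u).symm

lemma exists_isPerfectMatching_wheel_deleteEdges_spoke (hk : 1 < k) (hodd : Odd k)
    {i j : Fin k} (hji : j ≠ i) :
    ∃ M : ((wheel k).deleteEdges {s(.inl i, .inr ())}).Subgraph,
      M.IsPerfectMatching ∧ ∀ v, M.Adj v (spokeMatching j v) :=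
  exists_isPerfectMatching_of_involutive (spokeMatching_involutive hodd j)
    (wheel_deleteEdges_spoke_adj_spokeMatching hk hji)

lemma exists_ne_odd_val_sub (hk : 3 < k) (i m : Fin k) : ∃ j ≠ i, Odd (m - j).val := by
  have h1 : (1 : Fin k).val = 1 := by rw [Fin.val_one', Nat.mod_eq_of_lt (by omega)]
  have h3 : (3 : Fin k).val = 3 := Nat.mod_eq_of_lt hk
  by_cases hi : m - 1 = i
  · refine ⟨m - 3, fun h => ?_, by rw [sub_sub_cancel, h3]; decide⟩
    have := congrArg Fin.val (sub_right_injective (h.trans hi.symm))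
    rw [h1, h3] at this
    omega
  · exact ⟨m - 1, hi, by rw [sub_sub_cancel, h1]; decide⟩

lemma wheel_deleteEdges_spoke_connected (hk : 1 < k) (i : Fin k) :
    ((wheel k).deleteEdges {s(.inl i, .inr ())}).Connected := by
  have hspoke {m : Fin k} (hmi : m ≠ i) :
      ((wheel k).deleteEdges {s(.inl i, .inr ())}).Adj (.inr ()) (.inl m) := by
    simpa [hmi] using (wheel_adj_inl_inr m ()).symm
  refine (connected_iff_exists_forall_reachable _).2 ⟨.inr (), ?_⟩
  rintro (m | u)
  · by_cases hmi : m = i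
    · subst hmi
      have hrim : ((wheel k).deleteEdges {s(.inl m, .inr ())}).Adj (.inl (m + 1)) (.inl m) := by
        simpa using (wheel_adj_add_one hk m).symm
      exact (hspoke (Fin.add_one_ne_self hk m)).reachable.trans hrim.reachable
    · exact (hspoke hmi).reachable
  · rfl

lemma exists_isPerfectMatching_adj_of_wheel_deleteEdges_spoke_adj (hk : 3 < k) (hodd : Odd k)
    {i : Fin k} {u v : Fin k ⊕ Unit}
    (huv : ((wheel k).deleteEdges {s(.inl i, .inr ())}).Adj u v) :
    ∃ M : ((wheel k).deleteEdges {s(.inl i, .inr ())}).Subgraph,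
      M.IsPerfectMatching ∧ M.Adj u v := by
  have hrim (m : Fin k) : ∃ M : ((wheel k).deleteEdges {s(.inl i, .inr ())}).Subgraph,
      M.IsPerfectMatching ∧ M.Adj (.inl m) (.inl (m + 1)) := by
    obtain ⟨j, hji, hmj⟩ := exists_ne_odd_val_sub hk i m
    obtain ⟨M, hM, hMadj⟩ :=
      exists_isPerfectMatching_wheel_deleteEdges_spoke (by omega) hodd hji
    exact ⟨M, hM, spokeMatching_of_odd hmj ▸ hMadj (.inl m)⟩
  have hspoke {m : Fin k} (hmi : m ≠ i) :
      ∃ M : ((wheel k).deleteEdges {s(.inl i, .inr ())}).Subgraph,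
        M.IsPerfectMatching ∧ M.Adj (.inr ()) (.inl m) := by
    obtain ⟨M, hM, hMadj⟩ :=
      exists_isPerfectMatching_wheel_deleteEdges_spoke (by omega) hodd hmi
    exact ⟨M, hM, hMadj (.inr ())⟩
  rw [deleteEdges_adj, Set.mem_singleton_iff] at huv
  obtain ⟨hadj, hne⟩ := huv
  rcases u with m | ⟨⟩ <;> rcases v with n | ⟨⟩
  · obtain ⟨-, rfl | rfl⟩ := wheel_adj_inl_inl.1 hadj
    · exact hrim m
    · obtain ⟨M, hM, hMadj⟩ := hrim n
      exact ⟨M, hM, hMadj.symm⟩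
  · obtain ⟨M, hM, hMadj⟩ := hspoke (m := m) (by rintro rfl; exact hne rfl)
    exact ⟨M, hM, hMadj.symm⟩
  · exact hspoke (by rintro rfl; exact hne Sym2.eq_swap)
  · exact absurd hadj (wheel_not_adj_inr_inr () ())

lemma removable_wheel_spoke (hk : 3 < k) (hodd : Odd k) (i : Fin k) :
    Removable (wheel k) s(.inl i, .inr ()) := by
  refine ⟨wheel_adj_inl_inr i (), wheel_deleteEdges_spoke_connected (by omega) i, ?_, ?_⟩
  · rw [Nat.card_sum, Nat.card_eq_fintype_card, Fintype.card_fin]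
    omega
  · intro e he
    induction e using Sym2.ind with
    | _ u v => exact exists_isPerfectMatching_adj_of_wheel_deleteEdges_spoke_adj hk hodd he

end Wheel

theorem stmt13 (k : ℕ) (hk : 5 ≤ k) (hodd : Odd k) :
    (∀ i j : Fin k, (wheel k).Adj (Sum.inl i) (Sum.inl j) →
        ¬ Removable (wheel k) s(Sum.inl i, Sum.inl j)) ∧
      (∀ i : Fin k, Removable (wheel k) s(Sum.inl i, Sum.inr ())) := by
  have : NeZero k := ⟨by omega⟩
  refine ⟨fun i j hij => ?_, removable_wheel_spoke (by omega) hodd⟩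
  obtain ⟨-, rfl | rfl⟩ := wheel_adj_inl_inl.1 hij
  · exact not_removable_wheel_rim (by omega) i
  · rw [Sym2.eq_swap]
    exact not_removable_wheel_rim (by omega) j
end

section
/- Let G be a bicritical graph and let C be a 2-separation cut of G. Then both C-contractions of G are bicritical. -/
open SimpleGraph

universe u

/-!
Encode a perfect matching of `G - {a, b}` by the map sending each vertex to its partner. Every
matching edge leaving `X` starts at `u` or ends at `v`, since `X \ {u}` has no other neighbours
outside `X`. The matching of `G - {u, v}` shows that `|X \ {u}|` is even, and the number of
vertices of `X` matched outside `X` has the parity of the number of vertices of `X` present. So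
when the contracted vertex is deleted no matching edge crosses, and when two vertices of `Xᶜ` are
deleted exactly one does; either way the matching descends to `G/X - {a, b}`. The same argument
applied to `Xᶜ`, with `u` and `v` exchanged, handles `G/Xᶜ`.
-/

section

variable {V V' : Type*}

structure IsPartnerOn (G : SimpleGraph V) (W : Set V) (f : V → V) : Prop where
  mapsTo : Set.MapsTo f W W
  leftInvOn : Set.LeftInvOn f f W
  adj : ∀ x ∈ W, G.Adj x (f x)

theorem hasPM_induce_iff {G : SimpleGraph V} {W : Set V} :
    HasPM (G.induce W) ↔ ∃ f, IsPartnerOn G W f := by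
  classical
  constructor
  · rintro ⟨M, hM⟩
    rw [Subgraph.isPerfectMatching_iff] at hM
    choose p hp huniq using hM
    refine ⟨fun x => if hx : x ∈ W then p ⟨x, hx⟩ else x, fun x hx => ?_, fun x hx => ?_,
      fun x hx => ?_⟩
    · simp [hx]
    · simp only [dif_pos hx, dif_pos (p ⟨x, hx⟩).2]
      exact congrArg Subtype.val (huniq _ _ (hp _).symm).symm
    · simpa [hx] using M.adj_sub (hp ⟨x, hx⟩)
  · rintro ⟨f, hf⟩
    refine ⟨{ verts := Set.univ
              Adj := fun a b => (b : V) = f a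
              adj_sub := fun {a b} h => by simpa [h] using hf.adj a a.2
              edge_vert := fun _ => trivial
              symm := ⟨fun a b h => by simp [h, hf.leftInvOn a.2]⟩ }, ?_⟩
    rw [Subgraph.isPerfectMatching_iff]
    exact fun x => ⟨⟨f x, hf.mapsTo x.2⟩, rfl, fun y hy => Subtype.ext hy⟩

namespace IsPartnerOn

variable {G : SimpleGraph V} {W S : Set V} {f : V → V}

theorem mono (hf : IsPartnerOn G W f) (hS : S ⊆ W) (hmaps : Set.MapsTo f S S) :
    IsPartnerOn G S f :=
  ⟨hmaps, hf.leftInvOn.mono hS, fun x hx => hf.adj x (hS hx)⟩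

theorem even_ncard [Finite V] (hf : IsPartnerOn G W f) : Even W.ncard := by
  classical
  have := Fintype.ofFinite V
  rw [Set.ncard_eq_toFinset_card', ← ZMod.natCast_eq_zero_iff_even, Finset.card_eq_sum_ones,
    Nat.cast_sum, Nat.cast_one]
  refine Finset.sum_involution (fun x _ => f x) (fun _ _ => by decide)
    (fun x hx _ => (hf.adj x (Set.mem_toFinset.1 hx)).ne') (fun x hx => ?_)
    (fun x hx => hf.leftInvOn (Set.mem_toFinset.1 hx))
  exact Set.mem_toFinset.2 (hf.mapsTo (Set.mem_toFinset.1 hx))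

theorem even_ncard_inter_iff [Finite V] (hf : IsPartnerOn G W f) (S : Set V) :
    Even (S ∩ W).ncard ↔ Even {x ∈ S ∩ W | f x ∉ S}.ncard := by
  have hinner : IsPartnerOn G {x ∈ S ∩ W | f x ∈ S} f :=
    hf.mono (fun x hx => hx.1.2) fun x hx =>
      ⟨⟨hx.2, hf.mapsTo hx.1.2⟩, by rw [hf.leftInvOn hx.1.2]; exact hx.1.1⟩
  rw [← Set.ncard_inter_add_ncard_sdiff_eq_ncard (S ∩ W) (f ⁻¹' S), Nat.even_add]
  exact iff_true_left hinner.even_ncard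

theorem of_bijOn {H : SimpleGraph V'} {φ : V → V'} {T : Set V'} (hf : IsPartnerOn G W f)
    (hφ : Set.BijOn φ W T) (hadj : ∀ x ∈ W, ∀ y ∈ W, G.Adj x y → H.Adj (φ x) (φ y)) :
    ∃ g, IsPartnerOn H T g := by
  rcases W.eq_empty_or_nonempty with rfl | ⟨x₀, -⟩
  · refine ⟨id, ?_⟩
    rw [← hφ.image_eq, Set.image_empty]
    exact ⟨Set.mapsTo_empty _ _, fun _ h => h.elim, fun _ h => h.elim⟩
  have : Nonempty V := ⟨x₀⟩
  have hψ := hφ.invOn_invFunOn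
  have hψT := hφ.surjOn.mapsTo_invFunOn
  refine ⟨φ ∘ f ∘ Function.invFunOn φ W, fun z hz => ?_, fun z hz => ?_, fun z hz => ?_⟩
  · exact hφ.mapsTo (hf.mapsTo (hψT hz))
  · simp only [Function.comp_apply]
    rw [hψ.1 (hf.mapsTo (hψT hz)), hf.leftInvOn (hψT hz), hψ.2 hz]
  · have := hadj _ (hψT hz) _ (hf.mapsTo (hψT hz)) (hf.adj _ (hψT hz))
    rwa [hψ.2 hz] at this

end IsPartnerOn

section Contraction

variable {G : SimpleGraph V} {X : Set V} {x y : V}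

theorem toContract_of_mem_s16 (hx : x ∈ X) : toContract X x = Sum.inr () :=
  dif_pos hx

theorem toContract_of_notMem_s16 (hx : x ∉ X) : toContract X x = Sum.inl ⟨x, hx⟩ :=
  dif_neg hx

theorem toContract_injOn : Set.InjOn (toContract X) Xᶜ := fun x hx y hy h => by
  rw [toContract_of_notMem_s16 hx, toContract_of_notMem_s16 hy] at h
  exact congrArg Subtype.val (Sum.inl_injective h)

theorem contract_adj_toContract_s16 (h : G.Adj x y) (hne : toContract X x ≠ toContract X y) :
    (contract G X).Adj (toContract X x) (toContract X y) :=
  (fromRel_adj _ _ _).2 ⟨hne, Or.inl ⟨x, y, h, rfl, rfl⟩⟩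

theorem hasPM_contract_induce {S : Set V} {f : V → V} {T : Set (↥Xᶜ ⊕ Unit)}
    (hf : IsPartnerOn G S f) (hS : Set.BijOn (toContract X) S T) :
    HasPM ((contract G X).induce T) :=
  hasPM_induce_iff.2 <| hf.of_bijOn hS fun _ hx _ hy h =>
    contract_adj_toContract_s16 h (hS.injOn.ne hx hy h.ne)

end Contraction

/-- The shore `X = V(G₁) ∪ {u}` of a 2-separation cut `∂(X)` for the 2-separation `{u, v}`. -/
structure IsTwoSeparationShore (G : SimpleGraph V) (u v : V) (X : Set V) : Prop where
  left_mem : u ∈ X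
  right_notMem : v ∉ X
  not_adj : ∀ a ∈ X \ {u}, ∀ b ∈ Xᶜ \ {v}, ¬ G.Adj a b

namespace IsTwoSeparationShore

variable {G : SimpleGraph V} {u v : V} {X W : Set V} {f : V → V}

theorem compl (hX : IsTwoSeparationShore G u v X) : IsTwoSeparationShore G v u Xᶜ :=
  ⟨hX.right_notMem, fun h => h hX.left_mem, fun a ha b hb hab =>
    hX.not_adj b (by simpa using hb) a ha hab.symm⟩

theorem partner_eq_right (hX : IsTwoSeparationShore G u v X) (hf : IsPartnerOn G W f) {x : V}
    (hxW : x ∈ W) (hxX : x ∈ X) (hfx : f x ∉ X) (hxu : x ≠ u) : f x = v := by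
  by_contra h
  exact hX.not_adj x ⟨hxX, hxu⟩ (f x) ⟨hfx, h⟩ (hf.adj x hxW)

theorem ne (hX : IsTwoSeparationShore G u v X) : u ≠ v :=
  ne_of_mem_of_not_mem hX.left_mem hX.right_notMem

variable [Finite V]

theorem even_ncard_sdiff_singleton (hX : IsTwoSeparationShore G u v X) (hG : HasPM (G.induce {u, v}ᶜ)) :
    Even (X \ {u}).ncard := by
  obtain ⟨f, hf⟩ := hasPM_induce_iff.1 hG
  have hXW : X ∩ {u, v}ᶜ = X \ {u} := by
    ext x
    have := hX.right_notMem
    simp only [Set.mem_inter_iff, Set.mem_compl_iff, Set.mem_insert_iff, Set.mem_singleton_iff,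
      Set.mem_sdiff]
    grind
  have hcross : {x ∈ X ∩ {u, v}ᶜ | f x ∉ X} = ∅ := by
    refine Set.eq_empty_of_forall_notMem fun x ⟨⟨hxX, hxW⟩, hfx⟩ => ?_
    have hxu : x ≠ u := fun h => hxW (Or.inl h)
    exact hf.mapsTo hxW (Or.inr (hX.partner_eq_right hf hxW hxX hfx hxu))
  rw [← hXW, hf.even_ncard_inter_iff X, hcross, Set.ncard_empty]
  exact ⟨0, rfl⟩

theorem hasPM_contract_induce_compl_inl_inr (hX : IsTwoSeparationShore G u v X)
    (hG : Bicritical G) (β : ↥Xᶜ) :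
    HasPM ((contract G X).induce {Sum.inl β, Sum.inr ()}ᶜ) := by
  have hβu : (β : V) ≠ u := fun h => β.2 (h ▸ hX.left_mem)
  obtain ⟨f, hf⟩ := hasPM_induce_iff.1 (hG.2 u β hβu.symm)
  set W : Set V := {u, ↑β}ᶜ
  have hXW : X ∩ W = X \ {u} := by
    ext x
    have := β.2
    simp only [W, Set.mem_inter_iff, Set.mem_compl_iff, Set.mem_insert_iff,
      Set.mem_singleton_iff, Set.mem_sdiff]
    grind
  -- the only candidate to cross is the partner of `v`, and there is an even number of crossings
  have hcross : {x ∈ X ∩ W | f x ∉ X} = ∅ := by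
    have hsub : {x ∈ X ∩ W | f x ∉ X} ⊆ {f v} := by
      rintro x ⟨⟨hxX, hxW⟩, hfx⟩
      have hxu : x ≠ u := fun h => hxW (Or.inl h)
      rw [Set.mem_singleton_iff, ← hX.partner_eq_right hf hxW hxX hfx hxu, hf.leftInvOn hxW]
    have heven := (hf.even_ncard_inter_iff X).1 (hXW ▸ hX.even_ncard_sdiff_singleton (hG.2 u v hX.ne))
    have hle := (Set.ncard_le_ncard hsub).trans (Set.ncard_singleton _).le
    rw [← Set.ncard_eq_zero]
    grind
  have hmaps : Set.MapsTo f (W \ X) (W \ X) := fun x ⟨hxW, hxX⟩ =>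
    ⟨hf.mapsTo hxW, fun hfx => hcross.subset
      ⟨⟨hfx, hf.mapsTo hxW⟩, by rwa [hf.leftInvOn hxW]⟩⟩
  refine hasPM_contract_induce (hf.mono Set.sdiff_subset hmaps) ⟨?_, ?_, ?_⟩
  · rintro x ⟨hxW, hxX⟩
    simp_all [W, toContract_of_notMem_s16 hxX, Subtype.ext_iff]
  · exact toContract_injOn.mono fun x hx => hx.2
  · rintro (w | ⟨⟩) hw
    · refine ⟨w, ⟨?_, w.2⟩, toContract_of_notMem_s16 w.2⟩
      have hwu : (w : V) ≠ u := fun h => w.2 (h ▸ hX.left_mem)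
      simp_all [W, Subtype.ext_iff]
    · simp at hw

theorem hasPM_contract_induce_compl_inl_inl (hX : IsTwoSeparationShore G u v X)
    (hG : Bicritical G) {α β : ↥Xᶜ} (hαβ : α ≠ β) :
    HasPM ((contract G X).induce {Sum.inl α, Sum.inl β}ᶜ) := by
  obtain ⟨f, hf⟩ := hasPM_induce_iff.1 (hG.2 α β (Subtype.coe_injective.ne hαβ))
  set W : Set V := {↑α, ↑β}ᶜ
  have hXW : X ∩ W = X := by
    refine Set.inter_eq_left.2 fun x hx => ?_
    have := α.2
    have := β.2
    simp only [W, Set.mem_compl_iff, Set.mem_insert_iff, Set.mem_singleton_iff]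
    grind
  -- `X` is odd, so an odd number of its vertices cross, and only `u` and the partner of `v` can
  obtain ⟨r, hr⟩ : ∃ r, {x ∈ X ∩ W | f x ∉ X} = {r} := by
    have hsub : {x ∈ X ∩ W | f x ∉ X} ⊆ {u, f v} := by
      rintro x ⟨⟨hxX, hxW⟩, hfx⟩
      by_cases hxu : x = u
      · exact Or.inl hxu
      · rw [Set.mem_insert_iff, Set.mem_singleton_iff, ← hX.partner_eq_right hf hxW hxX hfx hxu,
          hf.leftInvOn hxW]
        exact Or.inr rfl
    have hodd : ¬ Even {x ∈ X ∩ W | f x ∉ X}.ncard := by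
      rw [← hf.even_ncard_inter_iff X, hXW,
        ← Set.ncard_sdiff_singleton_add_one hX.left_mem, Nat.even_add_one, not_not]
      exact hX.even_ncard_sdiff_singleton (hG.2 u v hX.ne)
    have hle := (Set.ncard_le_ncard hsub).trans (Set.ncard_insert_le _ _)
    rw [Set.ncard_singleton] at hle
    rw [← Set.ncard_eq_one]
    grind
  obtain ⟨⟨hrX, hrW⟩, hfr⟩ : r ∈ {x ∈ X ∩ W | f x ∉ X} := hr ▸ rfl
  have hmaps : Set.MapsTo f (insert r (W \ X)) (insert r (W \ X)) := by
    rintro x (rfl | ⟨hxW, hxX⟩)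
    · exact Or.inr ⟨hf.mapsTo hrW, hfr⟩
    by_cases hfx : f x ∈ X
    · have hfx_cross : f x ∈ {x ∈ X ∩ W | f x ∉ X} :=
        ⟨⟨hfx, hf.mapsTo hxW⟩, by rwa [hf.leftInvOn hxW]⟩
      rw [hr] at hfx_cross
      exact Or.inl hfx_cross
    · exact Or.inr ⟨hf.mapsTo hxW, hfx⟩
  have hsub : insert r (W \ X) ⊆ W := Set.insert_subset hrW Set.sdiff_subset
  refine hasPM_contract_induce (hf.mono hsub hmaps) ⟨?_, ?_, ?_⟩
  · rintro x (rfl | ⟨hxW, hxX⟩)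
    · simp [toContract_of_mem_s16 hrX]
    · simp_all [W, toContract_of_notMem_s16 hxX, Subtype.ext_iff]
  · refine (Set.injOn_insert fun h => h.2 hrX).2
      ⟨toContract_injOn.mono fun x hx => hx.2, ?_⟩
    rintro ⟨x, ⟨-, hxX⟩, hx⟩
    rw [toContract_of_notMem_s16 hxX, toContract_of_mem_s16 hrX] at hx
    exact Sum.inl_ne_inr hx
  · rintro (w | ⟨⟩) hw
    · refine ⟨w, Or.inr ⟨?_, w.2⟩, toContract_of_notMem_s16 w.2⟩
      simp_all [W, Subtype.ext_iff]
    · exact ⟨r, Or.inl rfl, toContract_of_mem_s16 hrX⟩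

theorem bicritical_contract (hX : IsTwoSeparationShore G u v X) (hG : Bicritical G)
    (hXc : (Xᶜ \ {v}).Nonempty) : Bicritical (contract G X) := by
  refine ⟨?_, ?_⟩
  · have heven := hX.compl.even_ncard_sdiff_singleton (Set.pair_comm u v ▸ hG.2 u v hX.ne)
    have hpos := (Set.ncard_pos (Set.toFinite _)).2 hXc
    have hcard := Set.ncard_sdiff_singleton_add_one (s := Xᶜ) hX.right_notMem
    rw [Nat.card_sum, Nat.card_coe_set_eq, Nat.card_unique]
    grind
  · rintro (α | ⟨⟩) (β | ⟨⟩) hab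
    · exact hX.hasPM_contract_induce_compl_inl_inl hG fun h => hab (h ▸ rfl)
    · exact hX.hasPM_contract_induce_compl_inl_inr hG α
    · exact Set.pair_comm (Sum.inl β) (Sum.inr ()) ▸ hX.hasPM_contract_induce_compl_inl_inr hG β
    · exact absurd rfl hab

end IsTwoSeparationShore

end

theorem stmt16_general {V : Type u} [Finite V] (G : SimpleGraph V)
    (hG : Bicritical G) (u v : V)
    (X : Set V) (hu : u ∈ X) (hv : v ∉ X)
    (h1 : (X \ {u}).Nonempty) (h2 : (Xᶜ \ {v}).Nonempty)
    (hcut : ∀ a ∈ X \ {u}, ∀ b ∈ Xᶜ \ {v}, ¬ G.Adj a b) :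
    Bicritical (contract G X) ∧ Bicritical (contract G Xᶜ) := by
  have hX : IsTwoSeparationShore G u v X := ⟨hu, hv, hcut⟩
  exact ⟨hX.bicritical_contract hG h2, hX.compl.bicritical_contract hG (by rwa [compl_compl])⟩

theorem stmt16 {V : Type u} [Finite V] (G : SimpleGraph V)
    (hG : Bicritical G) (u v : V) (huv : u ≠ v)
    (hdisc : ¬ (G.induce ({u, v}ᶜ : Set V)).Connected)
    (heven : ∀ c : (G.induce ({u, v}ᶜ : Set V)).ConnectedComponent,
      Even (Nat.card c.supp))
    (X : Set V) (hu : u ∈ X) (hv : v ∉ X)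
    (h1 : (X \ {u}).Nonempty) (h2 : (Xᶜ \ {v}).Nonempty)
    (hcut : ∀ a ∈ X \ {u}, ∀ b ∈ Xᶜ \ {v}, ¬ G.Adj a b) :
    Bicritical (contract G X) ∧ Bicritical (contract G Xᶜ) :=
  stmt16_general G hG u v X hu hv h1 h2 hcut
end
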